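/- arXiv:2007.10003 — 7 statements merged into one kernel-verified Lean document; each statement's English description precedes it below -/
import Mathlib

section
/- Let Γ = ⟨α,β⟩ with gcd(α,β)=1, 1<α<β, and let e₁ = αβ − a₁α − b₁β, e₂ = αβ − a₂α − b₂β be gaps of Γ (with 0 < a_i ≤ β−1, 0 < b_i ≤ α−1) with a₁ < a₂. Then the set {0, e₁, e₂} is Γ-lean if and only if b₁ > b₂. -/
open Set

/-- A numerical semigroup: additive submonoid of ℕ with finite complement. -/
def IsNumSgp (Γ : Set ℕ) : Prop :=
  0 ∈ Γ ∧ (∀ x ∈ Γ, ∀ y ∈ Γ, x + y ∈ Γ) ∧ Γᶜ.Finite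

/-- A Γ-semimodule: nonempty subset Δ ⊆ ℕ with Δ + Γ ⊆ Δ. -/
def IsGammaSemimodule (Γ Δ : Set ℕ) : Prop :=
  Δ.Nonempty ∧ ∀ x ∈ Δ, ∀ g ∈ Γ, x + g ∈ Δ

/-- The shifted copy x + Γ. -/
def shift (Γ : Set ℕ) (x : ℕ) : Set ℕ := {y | ∃ g ∈ Γ, y = x + g}

/-- E is a system of generators of Δ over Γ. -/
def GeneratesSgp (Γ E Δ : Set ℕ) : Prop := Δ = ⋃ x ∈ E, shift Γ x

/-- E is the minimal system of generators of Δ over Γ. -/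
def IsMinGen (Γ E Δ : Set ℕ) : Prop :=
  E ⊆ Δ ∧ GeneratesSgp Γ E Δ ∧ ∀ E' ⊆ E, GeneratesSgp Γ E' Δ → E' = E

/-- The conductorOf of Δ ⊆ ℕ: the least c such that every n ≥ c belongs to Δ. -/
noncomputable def conductorOf (Δ : Set ℕ) : ℕ := sInf {c | ∀ n, c ≤ n → n ∈ Δ}

/-- The Apéry set of Δ with respect to s: Δ \ (s + Δ). -/
def Apery (Δ : Set ℕ) (s : ℕ) : Set ℕ := {x | x ∈ Δ ∧ ¬∃ d ∈ Δ, x = s + d}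

/-- The syzygy semimodule of a set I of generators. -/
def Syz (Γ I : Set ℕ) : Set ℕ :=
  ⋃ g ∈ I, ⋃ g' ∈ I, ⋃ (_ : g ≠ g'), (shift Γ g ∩ shift Γ g')

/-- The numerical semigroup ⟨α, β⟩ = αℕ + βℕ. -/
def twoGen (α β : ℕ) : Set ℕ := {n | ∃ u v : ℕ, n = u * α + v * β}

/-- E ⊆ ℕ is Γ-lean: |x - y| ∉ Γ for all distinct x, y ∈ E. -/
def GammaLean (Γ E : Set ℕ) : Prop :=
  ∀ x ∈ E, ∀ y ∈ E, x ≠ y → max x y - min x y ∉ Γ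

/-- The dual of Δ : {z ∈ ℤ | z + Δ ⊆ Γ}. -/
def DualZ (Γ Δ : Set ℕ) : Set ℤ := {z | ∀ d ∈ Δ, ∃ g ∈ Γ, z + (d : ℤ) = (g : ℤ)}

/-- Shifted copy x + Γ inside ℤ. -/
def shiftZ (Γ : Set ℕ) (x : ℤ) : Set ℤ := {y | ∃ g ∈ Γ, y = x + (g : ℤ)}

def GeneratesZ (Γ : Set ℕ) (E D : Set ℤ) : Prop := D = ⋃ x ∈ E, shiftZ Γ x

def IsMinGenZ (Γ : Set ℕ) (E D : Set ℤ) : Prop :=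
  E ⊆ D ∧ GeneratesZ Γ E D ∧ ∀ E' ⊆ E, GeneratesZ Γ E' D → E' = E

lemma key_lin (α β u v s t : ℤ) (hα : 0 < α) (hβ : 0 < β) (hcop : IsCoprime α β)
    (hu : 1 ≤ u) (hu' : u ≤ β - 2) (hv : 1 ≤ v) (hs : 0 ≤ s) (ht : 0 ≤ t)
    (heq : u * α - v * β = s * α + t * β) : False := by
  have hdvd : β ∣ (u - s) * α := ⟨v + t, by linarith [heq]⟩
  have hβd : β ∣ u - s := hcop.symm.dvd_of_dvd_mul_right hdvd
  obtain ⟨k, hk⟩ := hβd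
  have hpos : 0 < u - s := by nlinarith
  have hk1 : 1 ≤ k := by nlinarith
  nlinarith

theorem lean_iff_b_decreasing (α β a₁ b₁ a₂ b₂ e₁ e₂ : ℕ)
    (hα : 1 < α) (hαβ : α < β) (hcop : Nat.Coprime α β)
    (ha₁ : 0 < a₁) (ha₁' : a₁ ≤ β - 1) (hb₁ : 0 < b₁) (hb₁' : b₁ ≤ α - 1)
    (ha₂ : 0 < a₂) (ha₂' : a₂ ≤ β - 1) (hb₂ : 0 < b₂) (hb₂' : b₂ ≤ α - 1)
    (he₁ : (e₁ : ℤ) = (α : ℤ) * β - a₁ * α - b₁ * β) (hg₁ : e₁ ∉ twoGen α β)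
    (he₂ : (e₂ : ℤ) = (α : ℤ) * β - a₂ * α - b₂ * β) (hg₂ : e₂ ∉ twoGen α β)
    (ha : a₁ < a₂) :
    GammaLean (twoGen α β) {0, e₁, e₂} ↔ b₂ < b₁ := by
  have hΓ0 : (0 : ℕ) ∈ twoGen α β := ⟨0, 0, by ring⟩
  have hcopZ : IsCoprime (α : ℤ) (β : ℤ) := Nat.isCoprime_iff_coprime.mpr hcop
  have hαZ : (0:ℤ) < α := by exact_mod_cast Nat.lt_of_lt_of_le Nat.zero_lt_one hα.le
  have hβZ : (0:ℤ) < β := by exact_mod_cast Nat.zero_lt_of_lt (lt_trans hα hαβ)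
  constructor
  · intro hlean
    by_contra hb
    push_neg at hb
    -- b₁ ≤ b₂ : then e₁ - e₂ ∈ Γ and e₂ < e₁
    set u : ℕ := a₂ - a₁ with hu
    set v : ℕ := b₂ - b₁ with hv
    have heq : e₁ = e₂ + (u * α + v * β) := by
      have : (e₁ : ℤ) = (e₂ : ℤ) + ((u : ℤ) * α + (v : ℤ) * β) := by
        have h1 : (u : ℤ) = (a₂ : ℤ) - a₁ := by simp [hu]; push_cast; omega
        have h2 : (v : ℤ) = (b₂ : ℤ) - b₁ := by simp [hv]; push_cast; omega
        rw [he₁, he₂, h1, h2]; ring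
      exact_mod_cast this
    have hupos : 0 < u * α := Nat.mul_pos (by omega) (by omega)
    have hlt : e₂ < e₁ := by omega
    have hmem : max e₁ e₂ - min e₁ e₂ ∈ twoGen α β := by
      refine ⟨u, v, ?_⟩
      rw [max_eq_left hlt.le, min_eq_right hlt.le, heq, Nat.add_sub_cancel_left]
    exact hlean e₁ (by simp) e₂ (by simp) (by omega) hmem
  · intro hb
    set u : ℕ := a₂ - a₁ with hu
    set v : ℕ := b₁ - b₂ with hv
    have h1 : (u : ℤ) = (a₂ : ℤ) - a₁ := by simp [hu]; push_cast; omega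
    have h2 : (v : ℤ) = (b₁ : ℤ) - b₂ := by simp [hv]; push_cast; omega
    have hd : (e₁ : ℤ) - e₂ = (u : ℤ) * α - (v : ℤ) * β := by
      rw [he₁, he₂, h1, h2]; ring
    have huZ : (1:ℤ) ≤ u := by rw [h1]; push_cast; omega
    have huZ' : (u:ℤ) ≤ (β:ℤ) - 2 := by rw [h1]; push_cast; omega
    have hvZ : (1:ℤ) ≤ v := by rw [h2]; push_cast; omega
    have hvZ' : (v:ℤ) ≤ (α:ℤ) - 2 := by rw [h2]; push_cast; omega
    have h12 : max e₁ e₂ - min e₁ e₂ ∉ twoGen α β := by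
      rintro ⟨s, t, hst⟩
      rcases le_total e₂ e₁ with hle | hle
      · rw [max_eq_left hle, min_eq_right hle] at hst
        have hstZ : (e₁ : ℤ) - e₂ = (s : ℤ) * α + (t : ℤ) * β := by
          have := congrArg (fun n : ℕ => (n : ℤ)) hst
          push_cast [Nat.sub_add_cancel] at this ⊢
          omega
        exact key_lin (α:ℤ) (β:ℤ) u v s t hαZ hβZ hcopZ huZ huZ' hvZ
          (by positivity) (by positivity) (by rw [← hd, hstZ])
      · rw [max_eq_right hle, min_eq_left hle] at hst
        have hstZ : (e₂ : ℤ) - e₁ = (s : ℤ) * α + (t : ℤ) * β := by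
          have := congrArg (fun n : ℕ => (n : ℤ)) hst
          push_cast at this ⊢
          omega
        have heq2 : (v:ℤ) * β - (u:ℤ) * α = (t:ℤ) * β + (s:ℤ) * α := by
          have : (e₂ : ℤ) - e₁ = (v:ℤ) * β - (u:ℤ) * α := by rw [he₁, he₂, h1, h2]; ring
          rw [this] at hstZ; linarith
        exact key_lin (β:ℤ) (α:ℤ) v u t s hβZ hαZ hcopZ.symm hvZ hvZ' huZ
          (by positivity) (by positivity) heq2
    intro x hx y hy hxy
    simp only [Set.mem_insert_iff, Set.mem_singleton_iff] at hx hy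
    have h12' : max e₂ e₁ - min e₂ e₁ ∉ twoGen α β := by
      rw [max_comm, min_comm]; exact h12
    rcases hx with rfl | rfl | rfl <;> rcases hy with rfl | rfl | rfl <;>
      first
        | exact absurd rfl hxy
        | simpa using hg₁
        | simpa using hg₂
        | exact h12
        | exact h12'
end

section
/- Let Γ = ⟨α,β⟩ with gcd(α,β)=1, 1<α<β, and let g, g' be two distinct gaps of Γ with representations g = αβ − aα − bβ, g' = αβ − a'α − b'β (0 < a,a' ≤ β−1, 0 < b,b' ≤ α−1). Then g − g' ∈ Γ ∪ (−Γ) if and only if (a−a') and (b−b') are both ≤ 0 or both ≥ 0; equivalently |g − g'| ∉ Γ iff (a < a' and b > b') or (a > a' and b < b'). -/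
open Set

lemma core_no_rep (α β : ℕ) (hα : 0 < α) (hβ : 0 < β) (hcop : Nat.Coprime α β)
    (s t u v : ℤ) (hs : s < (β : ℤ)) (ht : 0 < t) (hu : 0 ≤ u) (hv : 0 ≤ v)
    (heq : s * α - t * β = u * α + v * β) : False := by
  have hαZ : (0 : ℤ) < α := by exact_mod_cast hα
  have hβZ : (0 : ℤ) < β := by exact_mod_cast hβ
  have h1 : (s - u) * α = (t + v) * β := by ring_nf; linarith
  have hc : IsCoprime (β : ℤ) (α : ℤ) := by
    rw [Nat.isCoprime_iff_coprime]; exact hcop.symm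
  have hdvd : (β : ℤ) ∣ (s - u) := by
    refine hc.dvd_of_dvd_mul_right ?_
    exact ⟨t + v, by linarith [h1]⟩
  have hpos : 0 < s - u := by
    have h2 : 0 < (s - u) * α := by
      rw [h1]; positivity
    nlinarith
  have := Int.le_of_dvd hpos hdvd
  linarith

theorem gap_difference_criterion (α β a b a' b' g g' : ℕ)
    (hα : 1 < α) (hαβ : α < β) (hcop : Nat.Coprime α β)
    (ha : 0 < a) (ha1 : a ≤ β - 1) (hb : 0 < b) (hb1 : b ≤ α - 1)
    (ha' : 0 < a') (ha1' : a' ≤ β - 1) (hb' : 0 < b') (hb1' : b' ≤ α - 1)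
    (hg : (g : ℤ) = (α : ℤ) * β - a * α - b * β) (hgap : g ∉ twoGen α β)
    (hg' : (g' : ℤ) = (α : ℤ) * β - a' * α - b' * β) (hgap' : g' ∉ twoGen α β)
    (hne : g ≠ g') :
    ((∃ x ∈ twoGen α β, (g : ℤ) - g' = (x : ℤ) ∨ (g : ℤ) - g' = -(x : ℤ)) ↔
      ((a ≤ a' ∧ b ≤ b') ∨ (a' ≤ a ∧ b' ≤ b))) ∧
    ((max g g' - min g g' ∉ twoGen α β) ↔
      ((a < a' ∧ b' < b) ∨ (a' < a ∧ b < b'))) := by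
  have hd : (g : ℤ) - g' = ((a' : ℤ) - a) * α + ((b' : ℤ) - b) * β := by
    rw [hg, hg']; ring
  have ha1Z : (a : ℤ) ≤ (β : ℤ) - 1 := by
    have : (a : ℤ) ≤ ((β - 1 : ℕ) : ℤ) := by exact_mod_cast ha1
    omega
  have ha1Z' : (a' : ℤ) ≤ (β : ℤ) - 1 := by
    have : (a' : ℤ) ≤ ((β - 1 : ℕ) : ℤ) := by exact_mod_cast ha1'
    omega
  have hb1Z : (b : ℤ) ≤ (α : ℤ) - 1 := by
    have : (b : ℤ) ≤ ((α - 1 : ℕ) : ℤ) := by exact_mod_cast hb1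
    omega
  have hb1Z' : (b' : ℤ) ≤ (α : ℤ) - 1 := by
    have : (b' : ℤ) ≤ ((α - 1 : ℕ) : ℤ) := by exact_mod_cast hb1'
    omega
  have hα0 : 0 < α := by omega
  have hβ0 : 0 < β := by omega
  have H1 : (∃ x ∈ twoGen α β, (g : ℤ) - g' = (x : ℤ) ∨ (g : ℤ) - g' = -(x : ℤ)) ↔
      ((a ≤ a' ∧ b ≤ b') ∨ (a' ≤ a ∧ b' ≤ b)) := by
    constructor
    · rintro ⟨x, ⟨u, v, hx⟩, hcase⟩
      by_contra hcon
      have hsplit : (a < a' ∧ b' < b) ∨ (a' < a ∧ b < b') := by omega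
      have hxZ : (x : ℤ) = (u : ℤ) * α + (v : ℤ) * β := by exact_mod_cast hx
      have huZ : (0 : ℤ) ≤ u := Int.natCast_nonneg u
      have hvZ : (0 : ℤ) ≤ v := Int.natCast_nonneg v
      rcases hsplit with ⟨h1, h2⟩ | ⟨h1, h2⟩
      · have h1Z : (a : ℤ) < a' := by exact_mod_cast h1
        have h2Z : (b' : ℤ) < b := by exact_mod_cast h2
        rcases hcase with hc | hc
        · exact core_no_rep α β hα0 hβ0 hcop ((a' : ℤ) - a) ((b : ℤ) - b') u v
            (by omega) (by omega) huZ hvZ (by rw [hc, hxZ] at hd; linarith)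
        · exact core_no_rep β α hβ0 hα0 hcop.symm ((b : ℤ) - b') ((a' : ℤ) - a) v u
            (by omega) (by omega) hvZ huZ (by rw [hc, hxZ] at hd; linarith)
      · have h1Z : (a' : ℤ) < a := by exact_mod_cast h1
        have h2Z : (b : ℤ) < b' := by exact_mod_cast h2
        rcases hcase with hc | hc
        · exact core_no_rep β α hβ0 hα0 hcop.symm ((b' : ℤ) - b) ((a : ℤ) - a') v u
            (by omega) (by omega) hvZ huZ (by rw [hc, hxZ] at hd; linarith)
        · exact core_no_rep α β hα0 hβ0 hcop ((a : ℤ) - a') ((b' : ℤ) - b) u v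
            (by omega) (by omega) huZ hvZ (by rw [hc, hxZ] at hd; linarith)
    · rintro (⟨h1, h2⟩ | ⟨h1, h2⟩)
      · refine ⟨(a' - a) * α + (b' - b) * β, ⟨a' - a, b' - b, rfl⟩, Or.inl ?_⟩
        push_cast [Nat.cast_sub h1, Nat.cast_sub h2]
        linarith [hd]
      · refine ⟨(a - a') * α + (b - b') * β, ⟨a - a', b - b', rfl⟩, Or.inr ?_⟩
        push_cast [Nat.cast_sub h1, Nat.cast_sub h2]
        linarith [hd]
  have hiff : (max g g' - min g g' ∈ twoGen α β) ↔
      (∃ x ∈ twoGen α β, (g : ℤ) - g' = (x : ℤ) ∨ (g : ℤ) - g' = -(x : ℤ)) := by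
    constructor
    · intro h
      refine ⟨max g g' - min g g', h, ?_⟩
      rcases le_total g g' with hle | hle
      · right
        rw [max_eq_right hle, min_eq_left hle]
        push_cast [Nat.cast_sub hle]
        ring
      · left
        rw [max_eq_left hle, min_eq_right hle]
        push_cast [Nat.cast_sub hle]
        ring
    · rintro ⟨x, hx, h | h⟩
      · have hle : g' ≤ g := by
          have : (0 : ℤ) ≤ (g : ℤ) - g' := by rw [h]; exact Int.natCast_nonneg x
          exact_mod_cast by omega
        have hxeq : max g g' - min g g' = x := by
          rw [max_eq_left hle, min_eq_right hle]
          omega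
        rwa [hxeq]
      · have hle : g ≤ g' := by
          have : (g : ℤ) - g' ≤ 0 := by rw [h]; simp [Int.natCast_nonneg x]
          exact_mod_cast by omega
        have hxeq : max g g' - min g g' = x := by
          rw [max_eq_right hle, min_eq_left hle]
          omega
        rwa [hxeq]
  refine ⟨H1, ?_⟩
  rw [hiff, H1]
  omega
end

section
/- Let Γ = ⟨α,β⟩ with gcd(α,β)=1, 1<α<β, and Δ a Γ-semimodule with minimal generating set I and syzygy semimodule Syz(Δ) minimally generated by J. Then for every h ∈ J one has h − α − β ∉ Δ. -/
open Set

lemma twoGen_add {α β : ℕ} : ∀ x ∈ twoGen α β, ∀ y ∈ twoGen α β, x + y ∈ twoGen α β := by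
  rintro x ⟨u, v, rfl⟩ y ⟨u', v', rfl⟩
  exact ⟨u + u', v + v', by ring⟩

lemma minGen_aux {Γ E D : Set ℕ} (hadd : ∀ x ∈ Γ, ∀ y ∈ Γ, x + y ∈ Γ)
    (hmin : IsMinGen Γ E D) {e : ℕ} (he : e ∈ E) {d : ℕ} (hd : d ∈ D)
    {γ : ℕ} (hγ : γ ∈ Γ) (hγ0 : γ ≠ 0) : e ≠ d + γ := by
  intro heq
  obtain ⟨hE, hgen, hminimal⟩ := hmin
  have hd' : d ∈ ⋃ x ∈ E, shift Γ x := hgen ▸ hd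
  simp only [mem_iUnion, shift, mem_setOf_eq] at hd'
  obtain ⟨e₂, he₂, g', hg', rfl⟩ := hd'
  have hne : e₂ ≠ e := by omega
  have hgen' : GeneratesSgp Γ (E \ {e}) D := by
    unfold GeneratesSgp at hgen ⊢
    apply Subset.antisymm
    · intro y hy
      rw [hgen] at hy
      simp only [mem_iUnion, shift, mem_setOf_eq, mem_diff, mem_singleton_iff] at hy ⊢
      obtain ⟨x₀, hx₀, g'', hg'', rfl⟩ := hy
      by_cases hx : x₀ = e
      · subst hx
        exact ⟨e₂, ⟨he₂, hne⟩, g' + γ + g'', hadd _ (hadd _ hg' _ hγ) _ hg'', by omega⟩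
      · exact ⟨x₀, ⟨hx₀, hx⟩, g'', hg'', rfl⟩
    · rw [hgen]
      exact iUnion₂_mono' fun x hx => ⟨x, hx.1, subset_rfl⟩
  have hEE := hminimal (E \ {e}) diff_subset hgen'
  have h2 := (Set.ext_iff.mp hEE e).mpr he
  simp at h2

theorem syzygy_gen_sub_not_mem (α β : ℕ) (hα : 1 < α) (hαβ : α < β) (hcop : Nat.Coprime α β)
    (Δ I J : Set ℕ) (hΔ : IsGammaSemimodule (twoGen α β) Δ)
    (hI : IsMinGen (twoGen α β) I Δ)
    (hJ : IsMinGen (twoGen α β) J (Syz (twoGen α β) I)) :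
    ∀ h ∈ J, ∀ x ∈ Δ, (x : ℤ) ≠ (h : ℤ) - α - β := by 
  intro h hh x hx heq
  have hhx : h = x + α + β := by
    have : (h : ℤ) = (x : ℤ) + α + β := by linarith
    exact_mod_cast this
  have hadd : ∀ a ∈ twoGen α β, ∀ b ∈ twoGen α β, a + b ∈ twoGen α β := twoGen_add
  have hhS : h ∈ Syz (twoGen α β) I := hJ.1 hh
  simp only [Syz, mem_iUnion, mem_inter_iff, shift, mem_setOf_eq] at hhS
  obtain ⟨g, hg, g', hg', hgg', ⟨γ₁, hγ₁, he1⟩, ⟨γ₂, hγ₂, he2⟩⟩ := hhS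
  have hx' : x ∈ ⋃ y ∈ I, shift (twoGen α β) y := hI.2.1 ▸ hx
  simp only [mem_iUnion, shift, mem_setOf_eq] at hx'
  obtain ⟨g'', hg'', γ₃, hγ₃, hx3⟩ := hx'
  have habΓ : α + β ∈ twoGen α β := ⟨1, 1, by ring⟩
  have key : ∀ a ∈ I, a ≠ g'' → ∀ γ ∈ twoGen α β, γ ≠ 0 → h = a + γ → False := by
    intro a ha hag γ hγ hγ0 hhae
    obtain ⟨u, v, rfl⟩ := hγ
    rcases Nat.eq_zero_or_pos u with hu | hu
    · rcases Nat.eq_zero_or_pos v with hv | hv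
      · subst hu; subst hv; simp at hγ0
      · obtain ⟨v', rfl⟩ : ∃ v', v = v' + 1 := ⟨v - 1, by omega⟩
        have hsS : x + α ∈ Syz (twoGen α β) I := by
          simp only [Syz, mem_iUnion, mem_inter_iff, shift, mem_setOf_eq]
          refine ⟨a, ha, g'', hg'', hag, ⟨u * α + v' * β, ⟨u, v', rfl⟩, ?_⟩,
            ⟨γ₃ + α, hadd _ hγ₃ _ ⟨1, 0, by ring⟩, by omega⟩⟩
          have hvv : u * α + (v' + 1) * β = u * α + v' * β + β := by ring
          rw [hvv] at hhae
          omega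
        exact minGen_aux (γ := β) hadd hJ hh hsS ⟨0, 1, by ring⟩ (by omega) (by omega)
    · obtain ⟨u', rfl⟩ : ∃ u', u = u' + 1 := ⟨u - 1, by omega⟩
      have hsS : x + β ∈ Syz (twoGen α β) I := by
        simp only [Syz, mem_iUnion, mem_inter_iff, shift, mem_setOf_eq]
        refine ⟨a, ha, g'', hg'', hag, ⟨u' * α + v * β, ⟨u', v, rfl⟩, ?_⟩,
          ⟨γ₃ + β, hadd _ hγ₃ _ ⟨0, 1, by ring⟩, by omega⟩⟩
        have hvv : (u' + 1) * α + v * β = u' * α + v * β + α := by ring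
        rw [hvv] at hhae
        omega
      exact minGen_aux (γ := α) hadd hJ hh hsS ⟨1, 0, by ring⟩ (by omega) (by omega)
  by_cases h1 : γ₁ = 0
  · subst h1
    exact minGen_aux hadd hI hg hx habΓ (by omega) (by omega)
  by_cases h2 : γ₂ = 0
  · subst h2
    exact minGen_aux hadd hI hg' hx habΓ (by omega) (by omega)
  by_cases hgG : g = g''
  · exact key g' hg' (fun e => hgg' (hgG.trans e.symm)) γ₂ hγ₂ h2 he2
  · exact key g hg hgG γ₁ hγ₁ h1 he1
end

section
/- Let Γ = ⟨α,β⟩ with gcd(α,β)=1, 1<α<β, and Δ a Γ-semimodule with minimal generating set I and with Syz(Δ) minimally generated by J. Let M = max_{ℕ} J. Then the conductor of Δ satisfies c(Δ) = M − α − β + 1. -/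
open Set

namespace CondProof

/-- coordinates: x = a*α + b*β with 0 ≤ a < β. -/
def Coords (α β x : ℕ) (a : ℕ) (b : ℤ) : Prop := a < β ∧ (x:ℤ) = a*α + b*β

lemma mem_twoGen (u v : ℕ) : u * α + v * β ∈ twoGen α β := ⟨u, v, rfl⟩

lemma zero_mem_twoGen : (0:ℕ) ∈ twoGen α β := ⟨0, 0, by ring⟩

lemma alpha_mem_twoGen : α ∈ twoGen α β := ⟨1, 0, by ring⟩

lemma beta_mem_twoGen : β ∈ twoGen α β := ⟨0, 1, by ring⟩

lemma mul_beta_mem_twoGen (v : ℕ) : v * β ∈ twoGen α β := ⟨0, v, by ring⟩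

lemma add_mem_twoGen {α β x y : ℕ} (hx : x ∈ twoGen α β) (hy : y ∈ twoGen α β) :
    x + y ∈ twoGen α β := by
  obtain ⟨u, v, rfl⟩ := hx
  obtain ⟨u', v', rfl⟩ := hy
  exact ⟨u + u', v + v', by ring⟩

lemma isCoprimeZ {α β : ℕ} (hcop : Nat.Coprime α β) : IsCoprime (α:ℤ) (β:ℤ) := by
  rw [Int.isCoprime_iff_gcd_eq_one, Int.gcd_natCast_natCast]
  exact hcop

lemma exists_coords {α β : ℕ} (hβ : 0 < β) (hcop : Nat.Coprime α β) (x : ℕ) :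
    ∃ a b, Coords α β x a b := by
  obtain ⟨u, v, huv⟩ := isCoprimeZ hcop
  have hβZ : (0:ℤ) < β := by exact_mod_cast hβ
  have h0 : (0:ℤ) ≤ (x*u) % β := Int.emod_nonneg _ (by omega)
  have h1 : (x*u) % β < β := Int.emod_lt_of_pos _ hβZ
  have h2 : (β:ℤ) * ((x*u)/β) + (x*u) % β = x*u := Int.mul_ediv_add_emod _ _
  refine ⟨((x*u) % β).toNat, x*v + ((x*u)/β)*α, ?_, ?_⟩
  · omega
  · have h3 : ((((x*u) % β).toNat : ℤ)) = (x*u) % β := Int.toNat_of_nonneg h0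
    rw [h3]
    linear_combination (-(α:ℤ)) * h2 - (x:ℤ) * huv

lemma coords_of_repr {α β x : ℕ} {ax : ℕ} {bx : ℤ} (hcop : Nat.Coprime α β)
    (hx : Coords α β x ax bx) {s t : ℤ} (h : (x:ℤ) = s*α + t*β) (hs : 0 ≤ s) :
    ∃ k : ℤ, 0 ≤ k ∧ s = ax + k*β ∧ bx = t + k*α := by
  obtain ⟨haxlt, hxeq⟩ := hx
  have hβpos : 0 < β := Nat.pos_of_ne_zero (by omega)
  have hβZ : (0:ℤ) < β := by exact_mod_cast hβpos
  -- (s - ax) * α = (bx - t) * β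
  have key : ((s:ℤ) - ax) * α = (bx - t) * β := by linear_combination hxeq - h
  have hdvd : (β:ℤ) ∣ (s - ax) * α := ⟨bx - t, by linarith [key]⟩
  have hdvd2 : (β:ℤ) ∣ (s - ax) :=
    ((isCoprimeZ hcop).symm.dvd_of_dvd_mul_right hdvd)
  obtain ⟨k, hk⟩ := hdvd2
  have hk0 : 0 ≤ k := by nlinarith [hk, hs, hβZ]
  refine ⟨k, hk0, by linarith [hk], ?_⟩
  have h5 : (β:ℤ) * (k * α) = β * (bx - t) := by nlinarith [key, hk]
  have := mul_left_cancel₀ (by omega : (β:ℤ) ≠ 0) h5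
  linarith


lemma coords_unique {α β x : ℕ} {a a' : ℕ} {b b' : ℤ} (hcop : Nat.Coprime α β)
    (h1 : Coords α β x a b) (h2 : Coords α β x a' b') : a = a' ∧ b = b' := by
  obtain ⟨k, hk0, hk1, hk2⟩ := coords_of_repr hcop h1 h2.2 (by exact_mod_cast Nat.zero_le a')
  have ha : a < β := h1.1
  have ha' : a' < β := h2.1
  have hk00 : k = 0 := by
    rcases lt_or_ge k 1 with h | h
    · omega
    · exfalso
      have : (a':ℤ) ≥ (a:ℤ) + β := by nlinarith [hk1]
      have : (a':ℤ) < β := by exact_mod_cast ha'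
      omega
  constructor
  · have : (a:ℤ) = a' := by rw [hk00] at hk1; linarith
    exact_mod_cast this
  · rw [hk00] at hk2; linarith

lemma coords_inj {α β x y : ℕ} {a : ℕ} {b : ℤ} 
    (h1 : Coords α β x a b) (h2 : Coords α β y a b) : x = y := by
  have : (x:ℤ) = y := by rw [h1.2, h2.2]
  exact_mod_cast this

lemma mem_twoGen_iff {α β x : ℕ} {a : ℕ} {b : ℤ} (hcop : Nat.Coprime α β)
    (h : Coords α β x a b) : x ∈ twoGen α β ↔ 0 ≤ b := by
  constructor
  · rintro ⟨u, v, rfl⟩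
    have hr : ((u*α + v*β : ℕ) : ℤ) = (u:ℤ)*α + (v:ℤ)*β := by push_cast; ring
    obtain ⟨k, hk0, hk1, hk2⟩ := coords_of_repr hcop h hr (by positivity)
    have : (0:ℤ) ≤ v := by positivity
    nlinarith
  · intro hb
    refine ⟨a, b.toNat, ?_⟩
    have hb' : ((b.toNat : ℤ)) = b := Int.toNat_of_nonneg hb
    have : (x:ℤ) = ((a * α + b.toNat * β : ℕ) : ℤ) := by push_cast; rw [hb']; exact h.2
    exact_mod_cast this

lemma mem_shift_iff {α β g x : ℕ} {ag ax : ℕ} {bg bx : ℤ} (hcop : Nat.Coprime α β)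
    (hg : Coords α β g ag bg) (hx : Coords α β x ax bx) :
    x ∈ shift (twoGen α β) g ↔ (ag ≤ ax ∧ bg ≤ bx) ∨ (ax < ag ∧ bg + α ≤ bx) := by
  constructor
  · rintro ⟨γ, ⟨u, v, rfl⟩, rfl⟩
    have hr : ((g + (u*α + v*β) : ℕ) : ℤ) = ((ag:ℤ)+u)*α + (bg + v)*β := by
      push_cast; rw [hg.2]; push_cast; ring
    obtain ⟨k, hk0, hk1, hk2⟩ := coords_of_repr hcop hx hr (by positivity)
    rcases le_or_gt ag ax with hle | hlt
    · left
      refine ⟨hle, ?_⟩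
      have hv : (0:ℤ) ≤ v := by positivity
      have hα : (0:ℤ) ≤ α := by positivity
      nlinarith
    · right
      refine ⟨hlt, ?_⟩
      have hk1' : (ag:ℤ) + u = ax + k*β := hk1
      have hu : (0:ℤ) ≤ u := by positivity
      have hβZ : (0:ℤ) < β := by exact_mod_cast lt_of_le_of_lt (Nat.zero_le ag) hg.1
      have haxag : (ax:ℤ) < ag := by exact_mod_cast hlt
      have hk1'' : 1 ≤ k := by nlinarith
      have hv : (0:ℤ) ≤ v := by positivity
      nlinarith
  · rintro (⟨h1, h2⟩ | ⟨h1, h2⟩)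
    · refine ⟨(ax - ag)*α + (bx - bg).toNat * β, mem_twoGen _ _, ?_⟩
      have hb' : ((bx - bg).toNat : ℤ) = bx - bg := Int.toNat_of_nonneg (by omega)
      have : (x:ℤ) = ((g + ((ax - ag)*α + (bx - bg).toNat * β) : ℕ) : ℤ) := by
        push_cast [h1]
        rw [hb', hg.2, hx.2]
        push_cast
        ring
      exact_mod_cast this
    · refine ⟨(ax + β - ag)*α + (bx - bg - α).toNat * β, mem_twoGen _ _, ?_⟩
      have hb' : ((bx - bg - α).toNat : ℤ) = bx - bg - α := Int.toNat_of_nonneg (by omega)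
      have hagβ : ag ≤ β := le_of_lt hg.1
      have : (x:ℤ) = ((g + ((ax + β - ag)*α + (bx - bg - α).toNat * β) : ℕ) : ℤ) := by
        push_cast [Nat.sub_add_comm, (by omega : ag ≤ ax + β)]
        rw [hb', hg.2, hx.2]
        push_cast
        ring
      exact_mod_cast this


lemma shift_add {Γ : Set ℕ} (hΓ : ∀ x ∈ Γ, ∀ y ∈ Γ, x + y ∈ Γ) {g x γ : ℕ}
    (hx : x ∈ shift Γ g) (hγ : γ ∈ Γ) : x + γ ∈ shift Γ g := by
  obtain ⟨γ', hγ', rfl⟩ := hx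
  exact ⟨γ' + γ, hΓ _ hγ' _ hγ, by ring⟩

lemma twoGen_add {α β : ℕ} : ∀ x ∈ twoGen α β, ∀ y ∈ twoGen α β, x + y ∈ twoGen α β :=
  fun _ hx _ hy => add_mem_twoGen hx hy

lemma shift_trans {Γ : Set ℕ} (hΓ : ∀ x ∈ Γ, ∀ y ∈ Γ, x + y ∈ Γ) {g j : ℕ}
    (hg : g ∈ shift Γ j) : shift Γ g ⊆ shift Γ j := by
  rintro x ⟨γ, hγ, rfl⟩
  obtain ⟨γ', hγ', rfl⟩ := hg
  exact ⟨γ' + γ, hΓ _ hγ' _ hγ, by ring⟩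

lemma le_of_mem_shift {Γ : Set ℕ} {g x : ℕ} (h : x ∈ shift Γ g) : g ≤ x := by
  obtain ⟨γ, _, rfl⟩ := h; omega

lemma self_mem_shift {Γ : Set ℕ} (h0 : 0 ∈ Γ) (g : ℕ) : g ∈ shift Γ g :=
  ⟨0, h0, by ring⟩

lemma mem_gen_iff {Γ E Δ : Set ℕ} (hgen : GeneratesSgp Γ E Δ) (x : ℕ) :
    x ∈ Δ ↔ ∃ e ∈ E, x ∈ shift Γ e := by
  rw [hgen]; simp

/-- In a minimal generating set, no element lies in the shift of another. -/
lemma minGen_not_shift {Γ E Δ : Set ℕ} (hΓ : ∀ x ∈ Γ, ∀ y ∈ Γ, x + y ∈ Γ)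
    (hE : IsMinGen Γ E Δ) {g j : ℕ} (hg : g ∈ E) (hj : j ∈ E) (hne : g ≠ j) :
    g ∉ shift Γ j := by
  intro hmem
  obtain ⟨hEΔ, hgen, hmin⟩ := hE
  have hgen' : GeneratesSgp Γ (E \ {g}) Δ := by
    apply Set.eq_of_subset_of_subset
    · intro x hx
      rw [mem_gen_iff hgen] at hx
      obtain ⟨e, he, hxe⟩ := hx
      by_cases heg : e = g
      · rw [heg] at hxe
        have : x ∈ shift Γ j := shift_trans hΓ hmem hxe
        have hjmem : j ∈ E \ {g} := by
          simp only [Set.mem_diff, Set.mem_singleton_iff]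
          exact ⟨hj, fun h => hne h.symm⟩
        exact Set.mem_biUnion hjmem this
      · have hemem : e ∈ E \ {g} := by
          simp only [Set.mem_diff, Set.mem_singleton_iff]
          exact ⟨he, heg⟩
        exact Set.mem_biUnion hemem hxe
    · intro x hx
      simp only [Set.mem_iUnion] at hx
      obtain ⟨e, ⟨he, _⟩, hxe⟩ := hx
      rw [mem_gen_iff hgen]
      exact ⟨e, he, hxe⟩
  have := hmin (E \ {g}) Set.diff_subset hgen'
  have : g ∈ E \ {g} := this.symm ▸ hg
  simp at this

lemma mem_Syz_iff {Γ I : Set ℕ} (x : ℕ) :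
    x ∈ Syz Γ I ↔ ∃ g ∈ I, ∃ g' ∈ I, g ≠ g' ∧ x ∈ shift Γ g ∧ x ∈ shift Γ g' := by
  constructor
  · intro hx
    simp only [Syz, Set.mem_iUnion, Set.mem_inter_iff] at hx
    obtain ⟨g, hg, g', hg', hne, h1, h2⟩ := hx
    exact ⟨g, hg, g', hg', hne, h1, h2⟩
  · rintro ⟨g, hg, g', hg', hne, h1, h2⟩
    simp only [Syz, Set.mem_iUnion, Set.mem_inter_iff]
    exact ⟨g, hg, g', hg', hne, h1, h2⟩

/-- trichotomy of coordinates for two distinct elements of a minimal generating set. -/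
lemma lean_coords {α β : ℕ} (hcop : Nat.Coprime α β) {E Δ : Set ℕ}
    (hE : IsMinGen (twoGen α β) E Δ) {g g' : ℕ} (hg : g ∈ E) (hg' : g' ∈ E) (hne : g ≠ g')
    {ag ag' : ℕ} {bg bg' : ℤ} (hcg : Coords α β g ag bg) (hcg' : Coords α β g' ag' bg') :
    (ag < ag' ∧ bg' < bg ∧ bg < bg' + α) ∨ (ag' < ag ∧ bg < bg' ∧ bg' < bg + α) := by
  have h1 : g ∉ shift (twoGen α β) g' := minGen_not_shift twoGen_add hE hg hg' hne
  have h2 : g' ∉ shift (twoGen α β) g := minGen_not_shift twoGen_add hE hg' hg (Ne.symm hne)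
  rw [mem_shift_iff hcop hcg' hcg] at h1
  rw [mem_shift_iff hcop hcg hcg'] at h2
  push_neg at h1 h2
  rcases Nat.lt_trichotomy ag ag' with h | h | h
  · left
    refine ⟨h, ?_, ?_⟩
    · have := h2.1 (le_of_lt h)
      omega
    · have := h1.2 h
      omega
  · exfalso
    -- equal a-coords: both b-comparisons fail
    have hb1 := h1.1 (le_of_eq h.symm)
    have hb2 := h2.1 (le_of_eq h)
    omega
  · right
    refine ⟨h, ?_, ?_⟩
    · have := h1.1 (le_of_lt h)
      omega
    · have := h2.2 h
      omega


lemma shift_subset_gen {Γ E Δ : Set ℕ} (hgen : GeneratesSgp Γ E Δ) {e : ℕ} (he : e ∈ E) :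
    shift Γ e ⊆ Δ := by
  intro x hx
  exact (mem_gen_iff hgen x).mpr ⟨e, he, hx⟩

/-- If m + α = M or m + β = M with M maximal minimal generator of Syz, then m ∉ Syz. -/
lemma not_mem_Syz_pred {α β M : ℕ} {I J : Set ℕ}
    (hJ : IsMinGen (twoGen α β) J (Syz (twoGen α β) I)) (hMJ : M ∈ J)
    (γ : ℕ) (hγ : γ ∈ twoGen α β) (hγ0 : γ ≠ 0) :
    ∀ m, m + γ = M → m ∉ Syz (twoGen α β) I := by
  intro m hmM hmS
  rw [mem_gen_iff hJ.2.1] at hmS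
  obtain ⟨j, hjJ, hmj⟩ := hmS
  have hMshift : M ∈ shift (twoGen α β) j := by
    rw [← hmM]; exact shift_add twoGen_add hmj hγ
  have hjm : j ≤ m := le_of_mem_shift hmj
  have hjM : M ≠ j := by omega
  exact minGen_not_shift twoGen_add hJ hMJ hjJ hjM hMshift

/-- A syzygy with no Syz-predecessor at distance α or β is a minimal generator. -/
lemma mem_J_of {α β : ℕ} {I J : Set ℕ} (hα : 0 < α) (hβ : 0 < β)
    (hJ : IsMinGen (twoGen α β) J (Syz (twoGen α β) I)) {s : ℕ}
    (hs : s ∈ Syz (twoGen α β) I)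
    (hsα : ∀ m, m + α = s → m ∉ Syz (twoGen α β) I)
    (hsβ : ∀ m, m + β = s → m ∉ Syz (twoGen α β) I) : s ∈ J := by
  rw [mem_gen_iff hJ.2.1] at hs
  obtain ⟨j, hjJ, γ, ⟨u, v, rfl⟩, hsj⟩ := hs
  match u, v with
  | 0, 0 =>
    have hsj' : s = j := by simpa using hsj
    exact hsj' ▸ hjJ
  | u+1, v =>
    exfalso
    refine hsα (j + (u*α + v*β)) (by rw [hsj]; ring) ?_
    exact shift_subset_gen hJ.2.1 hjJ ⟨u*α + v*β, mem_twoGen u v, rfl⟩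
  | 0, v+1 =>
    exfalso
    refine hsβ (j + (0*α + v*β)) (by rw [hsj]; ring) ?_
    exact shift_subset_gen hJ.2.1 hjJ ⟨0*α + v*β, mem_twoGen 0 v, rfl⟩

/-- Goal 2: the point M - α - β is not in Δ. -/
lemma pred_not_mem {α β M : ℕ} {Δ I J : Set ℕ}
    (hα : 1 < α) (hαβ : α < β) (hcop : Nat.Coprime α β)
    (hI : IsMinGen (twoGen α β) I Δ)
    (hJ : IsMinGen (twoGen α β) J (Syz (twoGen α β) I))
    (hM : IsGreatest J M) :
    ∀ x : ℕ, x + (α + β) = M → x ∉ Δ := by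
  intro x hxM hxΔ
  have hβ : 0 < β := by omega
  rw [mem_gen_iff hI.2.1] at hxΔ
  obtain ⟨g, hg, hxg⟩ := hxΔ
  have hMSyz : M ∈ Syz (twoGen α β) I := hJ.1 hM.1
  rw [mem_Syz_iff] at hMSyz
  obtain ⟨gA, hgA, gB, hgB, hABne, hMA, hMB⟩ := hMSyz
  -- choose g' ≠ g with M ∈ shift g', and g₃ the other one
  obtain ⟨g', hg', hg'ne, hMg', g₃, hg₃, hg₃ne, hMg₃⟩ :
      ∃ g' ∈ I, g' ≠ g ∧ M ∈ shift (twoGen α β) g' ∧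
        ∃ g₃ ∈ I, g₃ ≠ g' ∧ M ∈ shift (twoGen α β) g₃ := by
    by_cases hAg : gA = g
    · exact ⟨gB, hgB, fun h => hABne (hAg.trans h.symm), hMB,
        gA, hgA, hABne, hMA⟩
    · exact ⟨gA, hgA, hAg, hMA, gB, hgB, fun h => hABne h.symm, hMB⟩
  -- m₁ = M - α, m₂ = M - β
  have hm1S : (x + β) ∉ Syz (twoGen α β) I :=
    not_mem_Syz_pred hJ hM.1 α alpha_mem_twoGen (by omega) (x+β) (by omega)
  have hm2S : (x + α) ∉ Syz (twoGen α β) I :=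
    not_mem_Syz_pred hJ hM.1 β beta_mem_twoGen (by omega) (x+α) (by omega)
  have hm1g : (x + β) ∈ shift (twoGen α β) g := shift_add twoGen_add hxg beta_mem_twoGen
  have hm2g : (x + α) ∈ shift (twoGen α β) g := shift_add twoGen_add hxg alpha_mem_twoGen
  have hm1g' : (x + β) ∉ shift (twoGen α β) g' := fun h =>
    hm1S (mem_Syz_iff _ |>.mpr ⟨g, hg, g', hg', fun he => hg'ne he.symm, hm1g, h⟩)
  have hm2g' : (x + α) ∉ shift (twoGen α β) g' := fun h =>
    hm2S (mem_Syz_iff _ |>.mpr ⟨g, hg, g', hg', fun he => hg'ne he.symm, hm2g, h⟩)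
  -- coordinates
  obtain ⟨aM, bM, hcM⟩ := exists_coords hβ hcop M
  obtain ⟨a', b', hcg'⟩ := exists_coords hβ hcop g'
  have hxMZ : (x:ℤ) + ((α:ℤ) + β) = M := by exact_mod_cast hxM
  have hM2 : (M:ℤ) = (aM:ℤ)*α + bM*β := hcM.2
  have hc2 : Coords α β (x + α) aM (bM - 1) := by
    refine ⟨hcM.1, ?_⟩
    push_cast
    linear_combination hxMZ + hM2
  have ha'β : a' < β := hcg'.1
  have haMβ : aM < β := hcM.1
  rcases Nat.eq_zero_or_pos aM with haM | haM
  · -- aM = 0 : x + β has coords (β-1, bM - α)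
    have hc1 : Coords α β (x + β) (β-1) (bM - α) := by
      refine ⟨by omega, ?_⟩
      have h1 : ((β - 1 : ℕ) : ℤ) = (β:ℤ) - 1 := by omega
      rw [h1]
      have hM2' : (M:ℤ) = bM*β := by rw [hM2, haM]; push_cast; ring
      push_cast
      linear_combination hxMZ + hM2'
    rw [mem_shift_iff hcop hcg' hcM] at hMg'
    rw [mem_shift_iff hcop hcg' hc1] at hm1g'
    rw [mem_shift_iff hcop hcg' hc2] at hm2g'
    have key : aM = a' ∧ bM = b' := by omega
    have hcg2 : Coords α β g' aM bM := by rw [key.1, key.2]; exact hcg'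
    have hMeq : M = g' := coords_inj hcM hcg2
    exact minGen_not_shift twoGen_add hI (hMeq.symm ▸ hg') hg₃
      (fun h => hg₃ne (h ▸ hMeq)) hMg₃
  · -- aM ≥ 1 : x + β has coords (aM - 1, bM)
    have hc1 : Coords α β (x + β) (aM-1) bM := by
      refine ⟨by omega, ?_⟩
      have h1 : ((aM - 1 : ℕ) : ℤ) = (aM:ℤ) - 1 := by omega
      rw [h1]
      push_cast
      linear_combination hxMZ + hM2
    rw [mem_shift_iff hcop hcg' hcM] at hMg'
    rw [mem_shift_iff hcop hcg' hc1] at hm1g'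
    rw [mem_shift_iff hcop hcg' hc2] at hm2g'
    have key : aM = a' ∧ bM = b' := by omega
    have hcg2 : Coords α β g' aM bM := by rw [key.1, key.2]; exact hcg'
    have hMeq : M = g' := coords_inj hcM hcg2
    exact minGen_not_shift twoGen_add hI (hMeq.symm ▸ hg') hg₃
      (fun h => hg₃ne (h ▸ hMeq)) hMg₃


lemma large_mem {α β : ℕ} (hβ : 0 < β) (hcop : Nat.Coprime α β) {m : ℕ}
    (h : (β-1)*α ≤ m) : m ∈ twoGen α β := by
  obtain ⟨a, b, hc⟩ := exists_coords hβ hcop m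
  rw [mem_twoGen_iff hcop hc]
  have haβ : a < β := hc.1
  have h2 : (a:ℤ)*α ≤ ((β:ℤ)-1)*α := by
    have h3 : (a:ℤ) ≤ (β:ℤ) - 1 := by omega
    have h4 : (0:ℤ) ≤ (α:ℤ) := by positivity
    nlinarith
  have h3' : (((β-1)*α:ℕ):ℤ) ≤ (m:ℤ) := by exact_mod_cast h
  have h4 : (((β-1)*α:ℕ):ℤ) = ((β:ℤ)-1)*α := by
    have : ((β-1:ℕ):ℤ) = (β:ℤ)-1 := by omega
    push_cast [← this]
    ring
  have hβZ : (0:ℤ) < β := by exact_mod_cast hβ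
  by_contra hb
  push_neg at hb
  have h5 : b ≤ -1 := by omega
  have h6 : b*β ≤ -1*β := mul_le_mul_of_nonneg_right h5 (le_of_lt hβZ)
  have := hc.2
  linarith

lemma gap_le {α β M : ℕ} {Δ I J : Set ℕ}
    (hα : 1 < α) (hαβ : α < β) (hcop : Nat.Coprime α β)
    (hΔ : IsGammaSemimodule (twoGen α β) Δ)
    (hI : IsMinGen (twoGen α β) I Δ)
    (hJ : IsMinGen (twoGen α β) J (Syz (twoGen α β) I))
    (hM : IsGreatest J M) :
    ∀ n : ℕ, n ∉ Δ → n + (α + β) ≤ M := by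
  intro n hn
  have hβ : 0 < β := by omega
  obtain ⟨d, hd⟩ := hΔ.1
  set S1 := {j | n + j*β ∈ Δ} with hS1
  have hcol : S1.Nonempty := by
    refine ⟨d + α*β, ?_⟩
    show n + (d + α*β)*β ∈ Δ
    have h1 : d ≤ d*β := Nat.le_mul_of_pos_right _ hβ
    have h2a : (β-1)*α ≤ β*α := by
      apply Nat.mul_le_mul_right; omega
    have h2b : β*α ≤ α*β*β := by
      calc β*α = α*β := by ring
      _ ≤ (α*β)*β := Nat.le_mul_of_pos_right _ hβ
    have hexp : (d + α*β)*β = d*β + α*β*β := by ring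
    have hγ : (β-1)*α ≤ n + (d + α*β)*β - d := by omega
    have hmem := large_mem hβ hcop hγ
    have heq : n + (d + α*β)*β = d + (n + (d + α*β)*β - d) := by omega
    rw [heq]
    exact hΔ.2 d hd _ hmem
  have hj₀mem : n + (sInf S1)*β ∈ Δ := Nat.sInf_mem hcol
  have hj₀pos : 0 < sInf S1 := by
    rcases Nat.eq_zero_or_pos (sInf S1) with h | h
    · exfalso
      rw [h] at hj₀mem
      simp only [Nat.zero_mul, Nat.add_zero] at hj₀mem
      exact hn hj₀mem
    · exact h
  obtain ⟨j₁, hj₁⟩ : ∃ j₁, sInf S1 = j₁ + 1 := ⟨sInf S1 - 1, by omega⟩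
  set x := n + j₁*β with hxdef
  have hnx : n ≤ x := by omega
  have hx : x ∉ Δ := by
    intro h
    have h2 : j₁ ∈ S1 := h
    have := Nat.sInf_le h2
    omega
  have hxβ : x + β ∈ Δ := by
    have heq : x + β = n + (sInf S1)*β := by rw [hxdef, hj₁]; ring
    rw [heq]; exact hj₀mem
  set S2 := {j | 0 < j ∧ x + j*α ∈ Δ} with hS2
  have hwalk : S2.Nonempty := by
    refine ⟨β, hβ, ?_⟩
    have hprod : β + (α-1)*β = β*α := by
      have h5 : α - 1 + 1 = α := by omega
      calc β + (α-1)*β = (α-1+1)*β := by ring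
      _ = α*β := by rw [h5]
      _ = β*α := by ring
    have h1 : x + β*α = (x + β) + (α-1)*β := by omega
    show x + β*α ∈ Δ
    rw [h1]
    exact hΔ.2 _ hxβ _ ⟨0, α-1, by ring⟩
  obtain ⟨hkpos, hkmem⟩ : 0 < sInf S2 ∧ x + (sInf S2)*α ∈ Δ := Nat.sInf_mem hwalk
  obtain ⟨m, hm⟩ : ∃ m, sInf S2 = m + 1 := ⟨sInf S2 - 1, by omega⟩
  set z' := x + m*α with hz'def
  have hz' : z' ∉ Δ := by
    rcases Nat.eq_zero_or_pos m with h0 | h0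
    · have heq : z' = x := by rw [hz'def, h0]; ring
      rw [heq]; exact hx
    · intro h
      have h2 : m ∈ S2 := ⟨h0, h⟩
      have := Nat.sInf_le h2
      omega
  have hzk : z' + α ∈ Δ := by
    have heq : z' + α = x + (sInf S2)*α := by rw [hz'def, hm]; ring
    rw [heq]; exact hkmem
  have hy' : z' + β ∈ Δ := by
    have heq : z' + β = (x + β) + m*α := by rw [hz'def]; ring
    rw [heq]; exact hΔ.2 _ hxβ _ ⟨m, 0, by ring⟩
  have hz'I : ∀ h ∈ I, z' ∉ shift (twoGen α β) h := fun h hh hc =>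
    hz' ((mem_gen_iff hI.2.1 z').mpr ⟨h, hh, hc⟩)
  obtain ⟨p, q, hcz'⟩ := exists_coords hβ hcop z'
  have hpβ : p < β := hcz'.1
  have hcy : Coords α β (z' + β) p (q+1) := by
    refine ⟨hpβ, ?_⟩
    push_cast
    linear_combination hcz'.2
  have hMSyz : M ∈ Syz (twoGen α β) I := hJ.1 hM.1
  rw [mem_Syz_iff] at hMSyz
  obtain ⟨gA, hgA, gB, hgB, hABne, -, -⟩ := hMSyz
  -- (B) : z' + β is not a syzygy
  have hy'nS : (z' + β) ∉ Syz (twoGen α β) I := by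
    intro hS
    rw [mem_Syz_iff] at hS
    obtain ⟨h, hh, h', hh', hhne, hmem, hmem'⟩ := hS
    obtain ⟨a3, b3, hc3⟩ := exists_coords hβ hcop h
    obtain ⟨a4, b4, hc4⟩ := exists_coords hβ hcop h'
    have hn3 := hz'I h hh
    have hn4 := hz'I h' hh'
    rw [mem_shift_iff hcop hc3 hcz'] at hn3
    rw [mem_shift_iff hcop hc4 hcz'] at hn4
    rw [mem_shift_iff hcop hc3 hcy] at hmem
    rw [mem_shift_iff hcop hc4 hcy] at hmem'
    have htri := lean_coords hcop hI hh hh' hhne hc3 hc4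
    omega
  have main : (z' + α) + β ∈ Syz (twoGen α β) I ∧ (z' + α) ∉ Syz (twoGen α β) I := by
    rcases lt_or_eq_of_le (show p + 1 ≤ β by omega) with hple | hpeq
    · -- no wrap : z' + α has coords (p+1, q)
      have hczk : Coords α β (z' + α) (p+1) q := by
        refine ⟨hple, ?_⟩
        push_cast
        linear_combination hcz'.2
      have hC : ∃ h₁ ∈ I, ∃ h₂ ∈ I, h₁ ≠ h₂ ∧ (z'+α) ∈ shift (twoGen α β) h₁ ∧
          (z'+β) ∈ shift (twoGen α β) h₂ := by
        obtain ⟨g₁, hg₁, hzg₁⟩ := (mem_gen_iff hI.2.1 _).mp hzk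
        obtain ⟨g₂, hg₂, hyg₂⟩ := (mem_gen_iff hI.2.1 _).mp hy'
        by_cases hgg : g₁ = g₂
        · rw [← hgg] at hyg₂
          obtain ⟨ag, bg, hcg⟩ := exists_coords hβ hcop g₁
          have hagβ : ag < β := hcg.1
          have hz'g := hz'I g₁ hg₁
          have hzg₁' := hzg₁
          have hyg₂' := hyg₂
          rw [mem_shift_iff hcop hcg hcz'] at hz'g
          rw [mem_shift_iff hcop hcg hczk] at hzg₁'
          rw [mem_shift_iff hcop hcg hcy] at hyg₂'
          have hforce : ag = p+1 ∧ bg = q+1-(α:ℤ) := by omega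
          obtain ⟨g', hg'I, hg'ne⟩ : ∃ g' ∈ I, g' ≠ g₁ := by
            by_cases hcase : gA = g₁
            · exact ⟨gB, hgB, fun hh => hABne (hcase.trans hh.symm)⟩
            · exact ⟨gA, hgA, hcase⟩
          obtain ⟨a2, b2, hcg2⟩ := exists_coords hβ hcop g'
          have ha2β : a2 < β := hcg2.1
          have htri := lean_coords hcop hI hg'I hg₁ hg'ne hcg2 hcg
          have hyshift : (z'+β) ∈ shift (twoGen α β) g' := by
            rw [mem_shift_iff hcop hcg2 hcy]
            omega
          exact ⟨g₁, hg₁, g', hg'I, fun hh => hg'ne hh.symm, hzg₁, hyshift⟩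
        · exact ⟨g₁, hg₁, g₂, hg₂, hgg, hzg₁, hyg₂⟩
      obtain ⟨h₁, hh₁, h₂, hh₂, hne12, hzh₁, hyh₂⟩ := hC
      constructor
      · rw [mem_Syz_iff]
        refine ⟨h₁, hh₁, h₂, hh₂, hne12, shift_add twoGen_add hzh₁ beta_mem_twoGen, ?_⟩
        have heq : z' + α + β = (z' + β) + α := by ring
        rw [heq]
        exact shift_add twoGen_add hyh₂ alpha_mem_twoGen
      · intro hS
        rw [mem_Syz_iff] at hS
        obtain ⟨h, hh, h', hh', hhne, hmem, hmem'⟩ := hS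
        obtain ⟨a3, b3, hc3⟩ := exists_coords hβ hcop h
        obtain ⟨a4, b4, hc4⟩ := exists_coords hβ hcop h'
        have hn3 := hz'I h hh
        have hn4 := hz'I h' hh'
        rw [mem_shift_iff hcop hc3 hcz'] at hn3
        rw [mem_shift_iff hcop hc4 hcz'] at hn4
        rw [mem_shift_iff hcop hc3 hczk] at hmem
        rw [mem_shift_iff hcop hc4 hczk] at hmem'
        have htri := lean_coords hcop hI hh hh' hhne hc3 hc4
        omega
    · -- wrap : p + 1 = β, z' + α has coords (0, q+α)
      have hpZ : (p:ℤ) = (β:ℤ) - 1 := by omega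
      have hczk : Coords α β (z' + α) 0 (q+(α:ℤ)) := by
        refine ⟨hβ, ?_⟩
        push_cast
        linear_combination hcz'.2 + (α:ℤ)*hpZ
      have hC : ∃ h₁ ∈ I, ∃ h₂ ∈ I, h₁ ≠ h₂ ∧ (z'+α) ∈ shift (twoGen α β) h₁ ∧
          (z'+β) ∈ shift (twoGen α β) h₂ := by
        obtain ⟨g₁, hg₁, hzg₁⟩ := (mem_gen_iff hI.2.1 _).mp hzk
        obtain ⟨g₂, hg₂, hyg₂⟩ := (mem_gen_iff hI.2.1 _).mp hy'
        by_cases hgg : g₁ = g₂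
        · rw [← hgg] at hyg₂
          obtain ⟨ag, bg, hcg⟩ := exists_coords hβ hcop g₁
          have hagβ : ag < β := hcg.1
          have hz'g := hz'I g₁ hg₁
          have hzg₁' := hzg₁
          have hyg₂' := hyg₂
          rw [mem_shift_iff hcop hcg hcz'] at hz'g
          rw [mem_shift_iff hcop hcg hczk] at hzg₁'
          rw [mem_shift_iff hcop hcg hcy] at hyg₂'
          have hforce : ag = 0 ∧ bg = q+1 := by omega
          obtain ⟨g', hg'I, hg'ne⟩ : ∃ g' ∈ I, g' ≠ g₁ := by
            by_cases hcase : gA = g₁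
            · exact ⟨gB, hgB, fun hh => hABne (hcase.trans hh.symm)⟩
            · exact ⟨gA, hgA, hcase⟩
          obtain ⟨a2, b2, hcg2⟩ := exists_coords hβ hcop g'
          have ha2β : a2 < β := hcg2.1
          have htri := lean_coords hcop hI hg'I hg₁ hg'ne hcg2 hcg
          have hzshift : (z'+α) ∈ shift (twoGen α β) g' := by
            rw [mem_shift_iff hcop hcg2 hczk]
            omega
          exact ⟨g', hg'I, g₁, hg₁, hg'ne, hzshift, hyg₂⟩
        · exact ⟨g₁, hg₁, g₂, hg₂, hgg, hzg₁, hyg₂⟩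
      obtain ⟨h₁, hh₁, h₂, hh₂, hne12, hzh₁, hyh₂⟩ := hC
      constructor
      · rw [mem_Syz_iff]
        refine ⟨h₁, hh₁, h₂, hh₂, hne12, shift_add twoGen_add hzh₁ beta_mem_twoGen, ?_⟩
        have heq : z' + α + β = (z' + β) + α := by ring
        rw [heq]
        exact shift_add twoGen_add hyh₂ alpha_mem_twoGen
      · intro hS
        rw [mem_Syz_iff] at hS
        obtain ⟨h, hh, h', hh', hhne, hmem, hmem'⟩ := hS
        obtain ⟨a3, b3, hc3⟩ := exists_coords hβ hcop h
        obtain ⟨a4, b4, hc4⟩ := exists_coords hβ hcop h'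
        have ha3β : a3 < β := hc3.1
        have ha4β : a4 < β := hc4.1
        have hn3 := hz'I h hh
        have hn4 := hz'I h' hh'
        rw [mem_shift_iff hcop hc3 hcz'] at hn3
        rw [mem_shift_iff hcop hc4 hcz'] at hn4
        rw [mem_shift_iff hcop hc3 hczk] at hmem
        rw [mem_shift_iff hcop hc4 hczk] at hmem'
        have htri := lean_coords hcop hI hh hh' hhne hc3 hc4
        omega
  obtain ⟨hsSyz, hzknS⟩ := main
  have hsJ : (z' + α) + β ∈ J := by
    refine mem_J_of (by omega) hβ hJ hsSyz ?_ ?_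
    · intro mm hmm
      have heq : mm = z' + β := by omega
      rw [heq]; exact hy'nS
    · intro mm hmm
      have heq : mm = z' + α := by omega
      rw [heq]; exact hzknS
  have hsM := hM.2 hsJ
  omega


lemma M_lower {α β M : ℕ} {Δ I J : Set ℕ}
    (hα : 1 < α) (hαβ : α < β) (hcop : Nat.Coprime α β)
    (hΔ : IsGammaSemimodule (twoGen α β) Δ)
    (hI : IsMinGen (twoGen α β) I Δ)
    (hJ : IsMinGen (twoGen α β) J (Syz (twoGen α β) I))
    (hM : IsGreatest J M) : α + β ≤ M + 1 := by
  by_contra hcon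
  push_neg at hcon
  have hgap := gap_le hα hαβ hcop hΔ hI hJ hM
  have hall : ∀ n : ℕ, n ∈ Δ := by
    intro n
    by_contra hn
    have := hgap n hn
    omega
  have hαpos : 0 < α := by omega
  -- small residues are minimal generators
  have hIlow : ∀ r, r < α → r ∈ I := by
    intro r hr
    have hr1 := hall r
    rw [mem_gen_iff hI.2.1] at hr1
    obtain ⟨g, hg, γ, ⟨u, v, hγ⟩, heq⟩ := hr1
    have hu : u = 0 := by
      by_contra hu
      have : α ≤ u*α := Nat.le_mul_of_pos_left _ (by omega)
      omega
    have hv : v = 0 := by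
      by_contra hv
      have : β ≤ v*β := Nat.le_mul_of_pos_left _ (by omega)
      omega
    have hγ0 : γ = 0 := by rw [hu, hv] at hγ; simpa using hγ
    have : r = g := by omega
    rw [this]; exact hg
  have hIhigh : ∀ g ∈ I, g < α := by
    intro g hg
    by_contra hge
    push_neg at hge
    have hr : g % α < α := Nat.mod_lt _ hαpos
    have hrI : g % α ∈ I := hIlow _ hr
    have hne : g ≠ g % α := by omega
    have hshift : g ∈ shift (twoGen α β) (g % α) :=
      ⟨α*(g/α), ⟨g/α, 0, by ring⟩, (Nat.mod_add_div g α).symm⟩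
    exact minGen_not_shift twoGen_add hI hg hrI hne hshift
  -- w = α + β - 1 is a syzygy
  have hmodlt : β % α < α := Nat.mod_lt _ hαpos
  have hmodpos : 0 < β % α := by
    rcases Nat.eq_zero_or_pos (β % α) with h0 | h0
    · exfalso
      have hdvd : α ∣ β := Nat.dvd_of_mod_eq_zero h0
      have : α ∣ Nat.gcd α β := Nat.dvd_gcd dvd_rfl hdvd
      rw [Nat.Coprime] at hcop
      rw [hcop] at this
      have := Nat.le_of_dvd one_pos this
      omega
    · exact h0
  have hdiv := Nat.mod_add_div β α
  set w := α + β - 1 with hw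
  have hw1 : w ∈ shift (twoGen α β) (α-1) := ⟨β, beta_mem_twoGen, by omega⟩
  have hw2 : w ∈ shift (twoGen α β) (β % α - 1) := by
    refine ⟨(β/α + 1)*α, ⟨β/α + 1, 0, by ring⟩, ?_⟩
    have hexp : (β/α + 1)*α = α*(β/α) + α := by ring
    omega
  have hwne : (α - 1) ≠ (β % α - 1) := by omega
  have hwSyz : w ∈ Syz (twoGen α β) I :=
    (mem_Syz_iff w).mpr ⟨α-1, hIlow _ (by omega), β % α - 1, hIlow _ (by omega),
      hwne, hw1, hw2⟩
  -- every syzygy is at least α above a generator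
  have hSyzdec : ∀ s ∈ Syz (twoGen α β) I, ∃ g ∈ I, α ≤ s - g ∧ g ≤ s ∧
      ∃ u₁ v₁ : ℕ, s = g + (u₁*α + v₁*β) := by
    intro s hs
    rw [mem_Syz_iff] at hs
    obtain ⟨g, hg, g', hg', hne, ⟨γ, ⟨u₁, v₁, hγ⟩, he₁⟩, hmem'⟩ := hs
    have hγ0 : γ ≠ 0 := by
      intro h0
      rw [h0] at he₁
      simp at he₁
      rw [he₁] at hmem'
      exact minGen_not_shift twoGen_add hI hg hg' hne hmem'
    have hγα : α ≤ γ := by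
      rcases Nat.eq_zero_or_pos u₁ with hu | hu
      · rcases Nat.eq_zero_or_pos v₁ with hv | hv
        · exfalso; apply hγ0; rw [hγ, hu, hv]; ring
        · have : β ≤ v₁*β := Nat.le_mul_of_pos_left _ hv
          omega
      · have : α ≤ u₁*α := Nat.le_mul_of_pos_left _ hu
        omega
    exact ⟨g, hg, by omega, by omega, u₁, v₁, by omega⟩
  -- w is a minimal generator of Syz
  have hwJ : ∃ j ∈ J, j = w := by
    have hw' := hwSyz
    rw [mem_gen_iff hJ.2.1] at hw'
    obtain ⟨j, hjJ, γ, ⟨u, v, hγ⟩, heq⟩ := hw'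
    have hjSyz : j ∈ Syz (twoGen α β) I := hJ.1 hjJ
    obtain ⟨g0, hg0, hjg0, hg0le, -⟩ := hSyzdec j hjSyz
    have hjα : α ≤ j := by omega
    have hv : v = 0 := by
      by_contra hv
      have : β ≤ v*β := Nat.le_mul_of_pos_left _ (by omega)
      omega
    rcases Nat.eq_zero_or_pos u with hu | hu
    · refine ⟨j, hjJ, ?_⟩
      rw [hu, hv] at hγ
      simp at hγ
      omega
    · exfalso
      have huα : α ≤ u*α := Nat.le_mul_of_pos_left _ hu
      have hjβ : j < β := by omega
      obtain ⟨g, hg, -, hgle, u₁, v₁, he₁⟩ := hSyzdec j hjSyz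
      have hjS := hjSyz
      rw [mem_Syz_iff] at hjS
      obtain ⟨ga, hga, gb, hgb, hneab, ⟨γa, ⟨ua, va, hγa⟩, hea⟩, ⟨γb, ⟨ub, vb, hγb⟩, heb⟩⟩ := hjS
      have hva : va = 0 := by
        by_contra hva
        have : β ≤ va*β := Nat.le_mul_of_pos_left _ (by omega)
        omega
      have hvb : vb = 0 := by
        by_contra hvb
        have : β ≤ vb*β := Nat.le_mul_of_pos_left _ (by omega)
        omega
      have hja : j = ga + ua*α := by
        rw [hva] at hγa
        simp at hγa
        omega
      have hjb : j = gb + ub*α := by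
        rw [hvb] at hγb
        simp at hγb
        omega
      have hgaα : ga < α := hIhigh ga hga
      have hgbα : gb < α := hIhigh gb hgb
      have hma : j % α = ga % α := by rw [hja, Nat.add_mul_mod_self_right]
      have hmb : j % α = gb % α := by rw [hjb, Nat.add_mul_mod_self_right]
      have : ga = gb := by
        rw [Nat.mod_eq_of_lt hgaα] at hma
        rw [Nat.mod_eq_of_lt hgbα] at hmb
        omega
      exact hneab this
  obtain ⟨j, hjJ, hjw⟩ := hwJ
  have := hM.2 hjJ
  omega

end CondProof


theorem conductor_formula (α β M : ℕ) (hα : 1 < α) (hαβ : α < β) (hcop : Nat.Coprime α β)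
    (Δ I J : Set ℕ) (hΔ : IsGammaSemimodule (twoGen α β) Δ)
    (hI : IsMinGen (twoGen α β) I Δ)
    (hJ : IsMinGen (twoGen α β) J (Syz (twoGen α β) I))
    (hM : IsGreatest J M) :
    (conductorOf Δ : ℤ) = (M : ℤ) - α - β + 1 := by
  have hgap := CondProof.gap_le hα hαβ hcop hΔ hI hJ hM
  have hpred := CondProof.pred_not_mem hα hαβ hcop hI hJ hM
  have hlow := CondProof.M_lower hα hαβ hcop hΔ hI hJ hM
  set c₀ := M + 1 - (α + β) with hc₀
  have hc₀sum : c₀ + (α + β) = M + 1 := by omega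
  have hmem : c₀ ∈ {c | ∀ n, c ≤ n → n ∈ Δ} := by
    intro n hcn
    by_contra hn
    have := hgap n hn
    omega
  have hle : conductorOf Δ ≤ c₀ := Nat.sInf_le hmem
  have hge : c₀ ≤ conductorOf Δ := by
    rcases Nat.eq_zero_or_pos c₀ with h0 | h0
    · omega
    · by_contra hlt
      push_neg at hlt
      have hcmem : conductorOf Δ ∈ {c | ∀ n, c ≤ n → n ∈ Δ} :=
        Nat.sInf_mem ⟨c₀, hmem⟩
      have hx : (M - (α+β)) ∈ Δ := hcmem _ (by omega)
      exact hpred (M - (α+β)) (by omega) hx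
  have hco : conductorOf Δ = c₀ := le_antisymm hle hge
  rw [hco]
  have hz : (c₀:ℤ) + ((α:ℤ)+β) = (M:ℤ) + 1 := by exact_mod_cast hc₀sum
  omega
end

section
/- Let Γ = ⟨α,β⟩ with gcd(α,β)=1, 1<α<β, and Δ a Γ-semimodule, and let M = max_{ℕ} J where J is the minimal generating set of Syz(Δ). If M = αβ − m₁α − m₂β with m₁, m₂ ≥ 0, then c(Δ) = c(Γ) − m₁α − m₂β. -/
open Set

lemma twoGen_add_s14 {α β : ℕ} {g h : ℕ} (hg : g ∈ twoGen α β) (hh : h ∈ twoGen α β) :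
    g + h ∈ twoGen α β := by
  obtain ⟨u, v, rfl⟩ := hg; obtain ⟨u', v', rfl⟩ := hh
  exact ⟨u + u', v + v', by ring⟩
lemma mem_gen {Γ E Δ : Set ℕ} (h : GeneratesSgp Γ E Δ) {d : ℕ} (hd : d ∈ Δ) :
    ∃ e ∈ E, ∃ g ∈ Γ, d = e + g := by
  rw [h] at hd
  simp only [Set.mem_iUnion] at hd
  obtain ⟨e, he, g, hg, hd⟩ := hd
  exact ⟨e, he, g, hg, hd⟩
lemma mem_gen' {Γ E Δ : Set ℕ} (h : GeneratesSgp Γ E Δ) {e g : ℕ} (he : e ∈ E) (hg : g ∈ Γ) :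
    e + g ∈ Δ := by
  rw [h]; simp only [Set.mem_iUnion]; exact ⟨e, he, g, hg, rfl⟩

/-- Key minimality lemma: a minimal generator cannot be written as d + g with d in Δ, 0 ≠ g ∈ Γ. -/
lemma mingen_key {α β : ℕ} {E D : Set ℕ} (hmin : IsMinGen (twoGen α β) E D)
    {e d g : ℕ} (he : e ∈ E) (hd : d ∈ D) (hg : g ∈ twoGen α β) (heq : e = d + g) :
    g = 0 := by
  by_contra hg0
  obtain ⟨e', he', g', hg', hd'⟩ := mem_gen hmin.2.1 hd
  have hee' : e = e' + (g' + g) := by omega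
  have hne : e' ≠ e := by omega
  have hgen : GeneratesSgp (twoGen α β) (E \ {e}) D := by
    apply Set.eq_of_subset_of_subset
    · intro m hm
      obtain ⟨f, hf, h, hh, hm⟩ := mem_gen hmin.2.1 hm
      simp only [Set.mem_iUnion]
      by_cases hfe : f = e
      · exact ⟨e', ⟨he', hne⟩, g' + g + h, twoGen_add_s14 (twoGen_add_s14 hg' hg) hh, by omega⟩
      · exact ⟨f, ⟨hf, hfe⟩, h, hh, hm⟩
    · intro m hm
      simp only [Set.mem_iUnion] at hm
      obtain ⟨f, hf, h, hh, hm⟩ := hm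
      rw [hmin.2.1]
      simp only [Set.mem_iUnion]
      exact ⟨f, hf.1, h, hh, hm⟩
  have h2 := hmin.2.2 (E \ {e}) Set.diff_subset hgen
  have : e ∈ E \ {e} := by rw [h2]; exact he
  exact this.2 rfl
lemma canon {α β g : ℕ} (hα : 0 < α) (hg : g ∈ twoGen α β) :
    ∃ u v, v < α ∧ g = u * α + v * β := by
  obtain ⟨u, v, rfl⟩ := hg
  refine ⟨u + (v / α) * β, v % α, Nat.mod_lt _ hα, ?_⟩
  have := Nat.div_add_mod v α
  ring_nf
  nlinarith [Nat.div_add_mod v α]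
lemma twoGen_comm {α β : ℕ} : twoGen α β = twoGen β α := by
  ext n; constructor <;> rintro ⟨u, v, rfl⟩ <;> exact ⟨v, u, by ring⟩

/-- if g ∈ Γ and g - α ∉ Γ then g = vβ with v < α. -/
lemma sub_alpha {α β g : ℕ} (hα : 0 < α) (hg : g ∈ twoGen α β)
    (h : ∀ h ∈ twoGen α β, g ≠ h + α) : ∃ v, v < α ∧ g = v * β := by
  obtain ⟨u, v, hv, rfl⟩ := canon hα hg
  match u with
  | 0 => exact ⟨v, hv, by ring⟩
  | u + 1 => exact absurd (by ring) (h (u * α + v * β) ⟨u, v, rfl⟩)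
lemma sub_beta {α β g : ℕ} (hβ : 0 < β) (hg : g ∈ twoGen α β)
    (h : ∀ h ∈ twoGen α β, g ≠ h + β) : ∃ u, u < β ∧ g = u * α := by
  rw [twoGen_comm] at hg
  obtain ⟨v, hv, hg⟩ := sub_alpha hβ hg (fun h' hh' => h h' (twoGen_comm ▸ hh'))
  exact ⟨v, hv, hg⟩

/-- Choose 0 ≤ b < α with α ∣ e - b*β, over ℤ. -/
lemma exists_res (α β : ℕ) (hα : 0 < α) (hcop : Nat.Coprime α β) (e : ℤ) :
    ∃ b : ℤ, 0 ≤ b ∧ b < α ∧ (α : ℤ) ∣ e - b * β := by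
  obtain ⟨s, t, hst⟩ : IsCoprime (α : ℤ) (β : ℤ) := by
    rw [Int.isCoprime_iff_gcd_eq_one]; exact_mod_cast hcop
  set b : ℤ := (t * e) % α with hbdef
  refine ⟨b, Int.emod_nonneg _ (by exact_mod_cast hα.ne'), Int.emod_lt_of_pos _ (by exact_mod_cast hα), ?_⟩
  have hb : (α : ℤ) ∣ t * e - b := Int.dvd_self_sub_of_emod_eq rfl
  have h2 : e - b * β = (α : ℤ) * (e * s) + (t * e - b) * β := by linear_combination (-e) * hst
  rw [h2]
  exact dvd_add (Dvd.intro _ rfl) (hb.mul_right β)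

/-- Chicken McNugget: every m ≥ (α-1)(β-1) is in ⟨α,β⟩. -/
lemma mcnugget {α β : ℕ} (hα : 0 < α) (hβ : 0 < β) (hcop : Nat.Coprime α β) {m : ℕ}
    (hm : (α - 1) * (β - 1) ≤ m) : m ∈ twoGen α β := by
  obtain ⟨b, hb0, hbα, a, ha⟩ := exists_res α β hα hcop (m : ℤ)
  have hm' : ((α : ℤ) - 1) * ((β : ℤ) - 1) ≤ m := by
    have h1 : ((α - 1) * (β - 1) : ℕ) ≤ m := hm
    have := Nat.cast_le (α := ℤ).mpr h1
    push_cast [Nat.cast_sub hα, Nat.cast_sub hβ] at this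
    linarith
  have ha0 : 0 ≤ a := by nlinarith
  refine ⟨a.toNat, b.toNat, ?_⟩
  have : (m : ℤ) = a.toNat * α + b.toNat * β := by
    rw [Int.toNat_of_nonneg ha0, Int.toNat_of_nonneg hb0]; linarith
  exact_mod_cast this

/-- Lattice lemma: if x,y are Γ-incomparable then x + (α-1)β ∈ y + Γ. -/
lemma lattice_lemma {α β : ℕ} (hα : 1 < α) (hβ : 1 < β) (hcop : Nat.Coprime α β)
    {x y : ℕ} (h1 : ∀ g ∈ twoGen α β, x ≠ y + g) (h2 : ∀ g ∈ twoGen α β, y ≠ x + g) :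
    ∃ w ∈ twoGen α β, x + (α - 1) * β = y + w := by
  obtain ⟨b, hb0, hbα, a, ha⟩ := exists_res α β (by omega) hcop ((x : ℤ) - y)
  have hkey : (x : ℤ) - y = b * β + α * a := by linarith
  have hmemz : ∀ p q : ℤ, 0 ≤ p → 0 ≤ q → ∃ g ∈ twoGen α β, (g : ℤ) = p * α + q * β := by
    intro p q hp hq
    refine ⟨p.toNat * α + q.toNat * β, ⟨p.toNat, q.toNat, rfl⟩, ?_⟩
    push_cast [Int.toNat_of_nonneg hp, Int.toNat_of_nonneg hq]
    ring
  have hb1 : 1 ≤ b := by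
    rcases eq_or_lt_of_le hb0 with h | h
    · exfalso
      subst h
      simp only [zero_mul, zero_add] at hkey
      rcases lt_trichotomy a 0 with h' | h' | h'
      · obtain ⟨g, hg, hgval⟩ := hmemz (-a) 0 (by omega) le_rfl
        refine h2 g hg ?_
        have : (y : ℤ) = x + g := by rw [hgval]; linarith
        exact_mod_cast this
      · refine h1 0 ⟨0, 0, by ring⟩ ?_
        have : (x : ℤ) = y + 0 := by subst h'; simp only [mul_zero] at hkey; push_cast; linarith
        exact_mod_cast this
      · obtain ⟨g, hg, hgval⟩ := hmemz a 0 (by omega) le_rfl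
        refine h1 g hg ?_
        have : (x : ℤ) = y + g := by rw [hgval]; linarith
        exact_mod_cast this
    · omega
  have ha1 : a ≤ -1 := by
    by_contra h
    push_neg at h
    obtain ⟨g, hg, hgval⟩ := hmemz a b (by omega) hb0
    refine h1 g hg ?_
    have : (x : ℤ) = y + g := by rw [hgval]; linarith
    exact_mod_cast this
  have ha2 : 1 - (β : ℤ) ≤ a := by
    by_contra h
    push_neg at h
    obtain ⟨g, hg, hgval⟩ := hmemz (-a - β) (α - b) (by omega) (by omega)
    refine h2 g hg ?_
    have : (y : ℤ) = x + g := by rw [hgval]; nlinarith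
    exact_mod_cast this
  obtain ⟨g, hg, hgval⟩ := hmemz (a + β) (b - 1) (by omega) (by omega)
  refine ⟨g, hg, ?_⟩
  have : (x : ℤ) + ((α : ℤ) - 1) * β = y + g := by rw [hgval]; nlinarith
  have hcast : ((α - 1 : ℕ) : ℤ) = (α : ℤ) - 1 := by omega
  exact_mod_cast hcast ▸ this
lemma mem_syz {Γ I : Set ℕ} {s : ℕ} :
    s ∈ Syz Γ I ↔ ∃ x ∈ I, ∃ y ∈ I, x ≠ y ∧ (∃ g ∈ Γ, s = x + g) ∧ (∃ g ∈ Γ, s = y + g) := by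
  simp only [Syz, Set.mem_iUnion, Set.mem_inter_iff]
  constructor
  · rintro ⟨x, hx, y, hy, hxy, h1, h2⟩
    exact ⟨x, hx, y, hy, hxy, h1, h2⟩
  · rintro ⟨x, hx, y, hy, hxy, h1, h2⟩
    exact ⟨x, hx, y, hy, hxy, h1, h2⟩

theorem conductor_formula_lattice (α β M m₁ m₂ : ℕ) (hα : 1 < α) (hαβ : α < β)
    (hcop : Nat.Coprime α β) (Δ I J : Set ℕ)
    (hΔ : IsGammaSemimodule (twoGen α β) Δ)
    (hI : IsMinGen (twoGen α β) I Δ)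
    (hJ : IsMinGen (twoGen α β) J (Syz (twoGen α β) I))
    (hM : IsGreatest J M)
    (hMrep : (M : ℤ) = (α : ℤ) * β - m₁ * α - m₂ * β) :
    (conductorOf Δ : ℤ) = ((α : ℤ) - 1) * ((β : ℤ) - 1) - m₁ * α - m₂ * β := by
  have hβ : 1 < β := lt_trans hα hαβ
  have hΓα : α ∈ twoGen α β := ⟨1, 0, by ring⟩
  have hΓβ : β ∈ twoGen α β := ⟨0, 1, by ring⟩
  -- conductor basic facts
  obtain ⟨x₀, hx₀⟩ := hΔ.1
  have hS : x₀ + (α - 1) * (β - 1) ∈ {k | ∀ n, k ≤ n → n ∈ Δ} := by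
    intro n hn
    have h1 : n - x₀ ∈ twoGen α β := mcnugget (by omega) (by omega) hcop (by omega)
    have h2 := hΔ.2 x₀ hx₀ _ h1
    rwa [Nat.add_sub_cancel' (by omega)] at h2
  have hc1 : ∀ n, conductorOf Δ ≤ n → n ∈ Δ := Nat.sInf_mem (Set.nonempty_of_mem hS)
  have hc2 : ∀ d ∈ Δ, d + 1 ≠ conductorOf Δ := by
    intro d hd hdc
    have hlt : conductorOf Δ - 1 < sInf {k | ∀ n, k ≤ n → n ∈ Δ} := by
      show _ < conductorOf Δ; omega
    have hnm : conductorOf Δ - 1 ∉ {k | ∀ n, k ≤ n → n ∈ Δ} := Nat.notMem_of_lt_sInf hlt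
    simp only [Set.mem_setOf_eq, not_forall] at hnm
    obtain ⟨n, hn, hnΔ⟩ := hnm
    have hn' : n = conductorOf Δ - 1 := by
      rcases Nat.lt_or_ge n (conductorOf Δ) with h | h
      · omega
      · exact absurd (hc1 n h) hnΔ
    exact hnΔ (by rw [hn', show conductorOf Δ - 1 = d from by omega]; exact hd)
  -- claim 1 : no element of J is d + α + β with d ∈ Δ
  have claim1 : ∀ j ∈ J, ∀ d ∈ Δ, d + α + β ≠ j := by
    intro j hj d hd heq
    obtain ⟨x, hx, y, hy, hxy, ⟨gx, hgx, hjx⟩, ⟨gy, hgy, hjy⟩⟩ := mem_syz.mp (hJ.1 hj)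
    obtain ⟨z, hz, h, hh, hdz⟩ := mem_gen hI.2.1 hd
    have hstep : ∀ w ∈ I, ∀ g ∈ twoGen α β, j = w + g → w ≠ z → j = w := by
      intro w hw g hg hjw hwz
      obtain ⟨u, v, hv, rfl⟩ := canon (by omega : 0 < α) hg
      rcases Nat.eq_zero_or_pos u with hu | hu
      · rcases Nat.eq_zero_or_pos v with hv0 | hv0
        · subst hu; subst hv0; simpa using hjw
        · exfalso
          subst hu
          obtain ⟨v', rfl⟩ : ∃ v', v = v' + 1 := ⟨v - 1, by omega⟩
          have hexp : (v' + 1) * β = v' * β + β := by ring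
          have hs : w + (0 * α + v' * β) ∈ Syz (twoGen α β) I := by
            rw [mem_syz]
            exact ⟨w, hw, z, hz, hwz, ⟨0 * α + v' * β, ⟨0, v', rfl⟩, rfl⟩,
              ⟨h + α, twoGen_add_s14 hh hΓα, by omega⟩⟩
          have := mingen_key hJ hj hs hΓβ (by omega)
          omega
      · exfalso
        obtain ⟨u', rfl⟩ : ∃ u', u = u' + 1 := ⟨u - 1, by omega⟩
        have hexp : (u' + 1) * α = u' * α + α := by ring
        have hs : w + (u' * α + v * β) ∈ Syz (twoGen α β) I := by
          rw [mem_syz]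
          exact ⟨w, hw, z, hz, hwz, ⟨u' * α + v * β, ⟨u', v, rfl⟩, rfl⟩,
            ⟨h + β, twoGen_add_s14 hh hΓβ, by omega⟩⟩
        have := mingen_key hJ hj hs hΓα (by omega)
        omega
    by_cases hxz : x = z
    · have hyz : y ≠ z := by rw [← hxz]; exact fun hyx => hxy hyx.symm
      have hjy' : j = y := hstep y hy gy hgy hjy hyz
      have hy' : y = z + (h + (α + β)) := by omega
      have := mingen_key hI hy (hI.1 hz) (twoGen_add_s14 hh (twoGen_add_s14 hΓα hΓβ)) hy'
      omega
    · have hjx' : j = x := hstep x hx gx hgx hjx hxz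
      by_cases hyz : y = z
      · have hx' : x = z + (h + (α + β)) := by omega
        have := mingen_key hI hx (hI.1 hz) (twoGen_add_s14 hh (twoGen_add_s14 hΓα hΓβ)) hx'
        omega
      · exact hxy (by rw [← hjx', hstep y hy gy hgy hjy hyz])
  -- the three distinguished values
  -- Pa = c + α - 1, Pb = c + β - 1, N = c + α + β - 1
  have hPaΔ : conductorOf Δ + α - 1 ∈ Δ := hc1 _ (by omega)
  have hPbΔ : conductorOf Δ + β - 1 ∈ Δ := hc1 _ (by omega)
  -- any Γ-representation of Pa has the form x + v*β with v < α
  have hrepPa : ∀ w ∈ I, ∀ g ∈ twoGen α β, conductorOf Δ + α - 1 = w + g →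
      ∃ v, v < α ∧ g = v * β := by
    intro w hw g hg hrep
    refine sub_alpha (by omega) hg ?_
    intro h hh hgh
    refine hc2 (w + h) (mem_gen' hI.2.1 hw hh) ?_
    omega
  have hrepPb : ∀ w ∈ I, ∀ g ∈ twoGen α β, conductorOf Δ + β - 1 = w + g →
      ∃ u, u < β ∧ g = u * α := by
    intro w hw g hg hrep
    refine sub_beta (by omega) hg ?_
    intro h hh hgh
    refine hc2 (w + h) (mem_gen' hI.2.1 hw hh) ?_
    omega
  -- no two distinct minimal generators differ by a multiple of β (or of α)
  have hgenβ : ∀ a ∈ I, ∀ b ∈ I, ∀ a' b' : ℕ, a + a' * β = b + b' * β → a' < b' → False := by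
    intro a ha b hb a' b' hab hlt
    obtain ⟨t, rfl⟩ : ∃ t, b' = a' + (t + 1) := ⟨b' - a' - 1, by omega⟩
    have key : a = b + (t + 1) * β := by
      have hz : (a : ℤ) + a' * β = b + (a' + (t + 1)) * β := by exact_mod_cast hab
      have hz2 : (a : ℤ) = b + (t + 1) * β := by linear_combination hz
      exact_mod_cast hz2
    have h0 := mingen_key hI ha (hI.1 hb) ⟨0, t + 1, by ring⟩ key
    rcases Nat.mul_eq_zero.mp h0 with h | h <;> omega
  have hgenα : ∀ a ∈ I, ∀ b ∈ I, ∀ a' b' : ℕ, a + a' * α = b + b' * α → a' < b' → False := by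
    intro a ha b hb a' b' hab hlt
    obtain ⟨t, rfl⟩ : ∃ t, b' = a' + (t + 1) := ⟨b' - a' - 1, by omega⟩
    have key : a = b + (t + 1) * α := by
      have hz : (a : ℤ) + a' * α = b + (a' + (t + 1)) * α := by exact_mod_cast hab
      have hz2 : (a : ℤ) = b + (t + 1) * α := by linear_combination hz
      exact_mod_cast hz2
    have h0 := mingen_key hI ha (hI.1 hb) ⟨t + 1, 0, by ring⟩ key
    rcases Nat.mul_eq_zero.mp h0 with h | h <;> omega
  -- Pa ∉ Syz
  have hPaN : conductorOf Δ + α - 1 ∉ Syz (twoGen α β) I := by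
    intro hmem
    obtain ⟨w, hw, w', hw', hww', ⟨g, hg, hPg⟩, ⟨g', hg', hPg'⟩⟩ := mem_syz.mp hmem
    obtain ⟨v, hv, rfl⟩ := hrepPa w hw g hg hPg
    obtain ⟨v', hv', rfl⟩ := hrepPa w' hw' g' hg' hPg'
    have hab : w + v * β = w' + v' * β := by omega
    rcases lt_trichotomy v v' with h | h | h
    · exact hgenβ w hw w' hw' v v' hab h
    · subst h; exact hww' (by omega)
    · exact hgenβ w' hw' w hw v' v hab.symm h
  -- Pb ∉ Syz
  have hPbN : conductorOf Δ + β - 1 ∉ Syz (twoGen α β) I := by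
    intro hmem
    obtain ⟨w, hw, w', hw', hww', ⟨g, hg, hPg⟩, ⟨g', hg', hPg'⟩⟩ := mem_syz.mp hmem
    obtain ⟨u, hu, rfl⟩ := hrepPb w hw g hg hPg
    obtain ⟨u', hu', rfl⟩ := hrepPb w' hw' g' hg' hPg'
    have hab : w + u * α = w' + u' * α := by omega
    rcases lt_trichotomy u u' with h | h | h
    · exact hgenα w hw w' hw' u u' hab h
    · subst h; exact hww' (by omega)
    · exact hgenα w' hw' w hw u' u hab.symm h
  -- N = c + α + β - 1 ∈ Syz
  have hNS : conductorOf Δ + α + β - 1 ∈ Syz (twoGen α β) I := by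
    obtain ⟨x, hx, gx, hgx, hPax⟩ := mem_gen hI.2.1 hPaΔ
    obtain ⟨y, hy, gy, hgy, hPby⟩ := mem_gen hI.2.1 hPbΔ
    obtain ⟨v, hv, rfl⟩ := hrepPa x hx gx hgx hPax
    obtain ⟨u, hu, rfl⟩ := hrepPb y hy gy hgy hPby
    by_cases hxy : x = y
    · -- forced corner: v = α - 1, so Pa = x + (α-1)β
      subst hxy
      have e1 : v * β + β = u * α + α := by omega
      have h1 : (v + 1) * β = (u + 1) * α := by
        rw [add_mul, add_mul, one_mul, one_mul]; omega
      have h2 : α ∣ (v + 1) * β := ⟨u + 1, by rw [h1]; ring⟩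
      have h3 : α ∣ v + 1 := Nat.Coprime.dvd_of_dvd_mul_right hcop h2
      have hv1 : v + 1 = α := by
        have := Nat.le_of_dvd (by omega) h3; omega
      -- find another generator
      have hex : ∃ y' ∈ I, y' ≠ x := by
        by_contra hno
        push_neg at hno
        obtain ⟨x₁, hx₁, y₁, hy₁, hxy₁, -, -⟩ := mem_syz.mp (hJ.1 hM.1)
        exact hxy₁ ((hno x₁ hx₁).trans (hno y₁ hy₁).symm)
      obtain ⟨y', hy', hyx⟩ := hex
      have h1' : ∀ g ∈ twoGen α β, x ≠ y' + g := by
        intro g hg hgg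
        have := mingen_key hI hx (hI.1 hy') hg hgg
        have hxx : x = y' := by omega
        exact hyx hxx.symm
      have h2' : ∀ g ∈ twoGen α β, y' ≠ x + g := by
        intro g hg hgg
        have := mingen_key hI hy' (hI.1 hx) hg hgg
        have hxx : y' = x := by omega
        exact hyx hxx
      obtain ⟨w, hwΓ, heqw⟩ := lattice_lemma hα hβ hcop h1' h2'
      -- Pa = x + (α-1)*β = y' + w
      have hPay' : conductorOf Δ + α - 1 = y' + w := by
        have hva : v = α - 1 := by omega
        have hvβ : v * β = (α - 1) * β := by rw [hva]
        omega
      rw [mem_syz]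
      exact ⟨x, hx, y', hy', fun hc => hyx hc.symm,
        ⟨v * β + β, ⟨0, v + 1, by ring⟩, by omega⟩,
        ⟨w + β, twoGen_add_s14 hwΓ hΓβ, by omega⟩⟩
    · rw [mem_syz]
      exact ⟨x, hx, y, hy, hxy, ⟨v * β + β, ⟨0, v + 1, by ring⟩, by omega⟩,
        ⟨u * α + α, ⟨u + 1, 0, by ring⟩, by omega⟩⟩
  -- N is a minimal generator of Syz
  have hNJ : conductorOf Δ + α + β - 1 ∈ J := by
    obtain ⟨jj, hjj, g, hg, hNg⟩ := mem_gen hJ.2.1 hNS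
    obtain ⟨u, v, hv, rfl⟩ := canon (by omega : 0 < α) hg
    rcases Nat.eq_zero_or_pos u with hu | hu
    · subst hu
      rcases Nat.eq_zero_or_pos v with hv0 | hv0
      · subst hv0
        simp only [Nat.zero_mul, Nat.mul_zero, Nat.add_zero, Nat.zero_add] at hNg
        rwa [hNg]
      · exfalso
        obtain ⟨v', rfl⟩ : ∃ v', v = v' + 1 := ⟨v - 1, by omega⟩
        have hexp : (v' + 1) * β = v' * β + β := by ring
        refine hPaN ?_
        have : conductorOf Δ + α - 1 = jj + (0 * α + v' * β) := by omega
        rw [this]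
        exact mem_gen' hJ.2.1 hjj ⟨0, v', rfl⟩
    · exfalso
      obtain ⟨u', rfl⟩ : ∃ u', u = u' + 1 := ⟨u - 1, by omega⟩
      have hexp : (u' + 1) * α = u' * α + α := by ring
      refine hPbN ?_
      have : conductorOf Δ + β - 1 = jj + (u' * α + v * β) := by omega
      rw [this]
      exact mem_gen' hJ.2.1 hjj ⟨u', v, rfl⟩
  -- conclude : M = c + α + β - 1
  have hMN : M = conductorOf Δ + α + β - 1 := by
    have hle : conductorOf Δ + α + β - 1 ≤ M := hM.2 hNJ
    rcases Nat.lt_or_ge (conductorOf Δ + α + β - 1) M with h | h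
    · exfalso
      have hd : M - α - β ∈ Δ := hc1 _ (by omega)
      exact claim1 M hM.1 _ hd (by omega)
    · omega
  have hfin : (conductorOf Δ : ℤ) + α + β = (M : ℤ) + 1 := by
    have : conductorOf Δ + α + β = M + 1 := by omega
    exact_mod_cast this
  linear_combination hfin + hMrep
end

section
/- Let Γ = ⟨α,β⟩ with gcd(α,β)=1, 1<α<β, and Δ a Γ-semimodule. Then M := max_{ℕ} J, the largest minimal generator of Syz(Δ), equals max_{ℕ} Ap(Δ, α+β), the largest element of the Apéry set of Δ with respect to α+β. -/
open Set

namespace MaxSyzAux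

def MinSet (G S : Set ℕ) : Set ℕ := {x | x ∈ S ∧ ∀ y ∈ S, (∃ g ∈ G, x = y + g) → y = x}

lemma tg_mem {α β : ℕ} (u v : ℕ) : u * α + v * β ∈ twoGen α β := ⟨u, v, rfl⟩

lemma tg_zero {α β : ℕ} : 0 ∈ twoGen α β := ⟨0, 0, by simp⟩

lemma tg_add {α β x y : ℕ} (hx : x ∈ twoGen α β) (hy : y ∈ twoGen α β) :
    x + y ∈ twoGen α β := by
  obtain ⟨u, v, rfl⟩ := hx
  obtain ⟨u', v', rfl⟩ := hy
  exact ⟨u + u', v + v', by ring⟩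

lemma mem_syz_iff {G I : Set ℕ} {x : ℕ} :
    x ∈ Syz G I ↔ ∃ a ∈ I, ∃ b ∈ I, a ≠ b ∧ (∃ g ∈ G, x = a + g) ∧ ∃ g ∈ G, x = b + g := by
  constructor
  · intro hx
    simp only [Syz, Set.mem_iUnion, Set.mem_inter_iff, shift, Set.mem_setOf_eq] at hx
    obtain ⟨a, ha, b, hb, hab, h1, h2⟩ := hx
    exact ⟨a, ha, b, hb, hab, h1, h2⟩
  · rintro ⟨a, ha, b, hb, hab, h1, h2⟩
    simp only [Syz, Set.mem_iUnion, Set.mem_inter_iff, shift, Set.mem_setOf_eq]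
    exact ⟨a, ha, b, hb, hab, h1, h2⟩

lemma syz_closed {α β : ℕ} {I : Set ℕ} :
    ∀ x ∈ Syz (twoGen α β) I, ∀ g ∈ twoGen α β, x + g ∈ Syz (twoGen α β) I := by
  intro x hx g hg
  obtain ⟨a, ha, b, hb, hab, ⟨g1, hg1, hx1⟩, ⟨g2, hg2, hx2⟩⟩ := mem_syz_iff.mp hx
  exact mem_syz_iff.mpr ⟨a, ha, b, hb, hab, ⟨g1 + g, tg_add hg1 hg, by omega⟩,
    ⟨g2 + g, tg_add hg2 hg, by omega⟩⟩

lemma minset_gen {α β : ℕ} {S : Set ℕ}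
    (hcl : ∀ x ∈ S, ∀ g ∈ twoGen α β, x + g ∈ S) :
    GeneratesSgp (twoGen α β) (MinSet (twoGen α β) S) S := by
  unfold GeneratesSgp
  ext n
  simp only [Set.mem_iUnion, shift, Set.mem_setOf_eq]
  constructor
  · intro hn
    induction n using Nat.strong_induction_on with
    | _ n ih =>
      by_cases hmin : ∀ y ∈ S, (∃ g ∈ twoGen α β, n = y + g) → y = n
      · exact ⟨n, ⟨hn, hmin⟩, 0, tg_zero, by simp⟩
      · push_neg at hmin
        obtain ⟨y, hyS, ⟨g, hg, hng⟩, hyn⟩ := hmin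
        have hg0 : g ≠ 0 := by rintro rfl; omega
        have hylt : y < n := by omega
        obtain ⟨e, he, g', hg', hyg⟩ := ih y hylt hyS
        exact ⟨e, he, g' + g, tg_add hg' hg, by omega⟩
  · rintro ⟨e, he, g, hg, rfl⟩
    exact hcl e he.1 g hg

lemma minGen_eq {α β : ℕ} {E S : Set ℕ}
    (hcl : ∀ x ∈ S, ∀ g ∈ twoGen α β, x + g ∈ S)
    (hE : IsMinGen (twoGen α β) E S) : E = MinSet (twoGen α β) S := by
  have hsub : MinSet (twoGen α β) S ⊆ E := by
    intro x hx
    have hxS := hx.1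
    rw [hE.2.1] at hxS
    simp only [Set.mem_iUnion, shift, Set.mem_setOf_eq] at hxS
    obtain ⟨e, heE, g, hg, hxe⟩ := hxS
    have := hx.2 e (hE.1 heE) ⟨g, hg, hxe⟩
    rwa [this] at heE
  exact (hE.2.2 _ hsub (minset_gen hcl)).symm

end MaxSyzAux
namespace MaxSyzAux

lemma exists_v {α β : ℕ} (hα : 0 < α) (hcop : Nat.Coprime α β) (d : ℤ) :
    ∃ v : ℕ, v < α ∧ (α : ℤ) ∣ d - (v : ℤ) * (β : ℤ) := by
  haveI : NeZero α := ⟨hα.ne'⟩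
  refine ⟨((d : ZMod α) * (β : ZMod α)⁻¹).val, ZMod.val_lt _, ?_⟩
  have hb : (β : ZMod α)⁻¹ * (β : ZMod α) = 1 := by
    rw [mul_comm]; exact ZMod.coe_mul_inv_eq_one β hcop.symm
  rw [← ZMod.intCast_zmod_eq_zero_iff_dvd]
  push_cast
  rw [ZMod.natCast_val, ZMod.cast_id, mul_assoc, hb, mul_one, sub_self]

lemma tg_large {α β : ℕ} (hα : 0 < α) (hβ : 0 < β) (hcop : Nat.Coprime α β)
    {n : ℕ} (hn : α * β ≤ n) : n ∈ twoGen α β := by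
  obtain ⟨v, hvα, u, hu⟩ := exists_v (β := β) hα hcop (n : ℤ)
  have hαZ : (0:ℤ) < (α:ℤ) := by exact_mod_cast hα
  have hβZ : (0:ℤ) < (β:ℤ) := by exact_mod_cast hβ
  have hnZ : (α:ℤ) * β ≤ (n:ℤ) := by exact_mod_cast hn
  have hvZ : (v:ℤ) ≤ (α:ℤ) - 1 := by
    have : (v:ℤ) < (α:ℤ) := by exact_mod_cast hvα
    omega
  have hvβ : (v:ℤ) * β ≤ (α:ℤ) * β - β := by nlinarith
  have hu0 : (0:ℤ) ≤ u := by
    by_contra hc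
    push_neg at hc
    have h1 : u ≤ -1 := by omega
    have h2 : (α:ℤ) * u ≤ (α:ℤ) * (-1) := by
      exact mul_le_mul_of_nonneg_left h1 (le_of_lt hαZ)
    -- hu : n - v*β = α * u
    linarith
  refine ⟨u.toNat, v, ?_⟩
  have h1 : (u.toNat : ℤ) = u := Int.toNat_of_nonneg hu0
  have : (n:ℤ) = ((u.toNat * α + v * β : ℕ) : ℤ) := by push_cast; rw [h1]; linarith
  exact_mod_cast this

lemma key_spread {α β : ℕ} (hα : 0 < α) (hβ : 0 < β) (hcop : Nat.Coprime α β)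
    {x y : ℕ} (h2 : ¬∃ g ∈ twoGen α β, y = x + g) :
    ∃ g ∈ twoGen α β, x + α * β = y + g := by
  obtain ⟨v, hvα, u, hu⟩ := exists_v (β := β) hα hcop ((x:ℤ) - (y:ℤ))
  -- hu : x - y - v*β = α * u
  by_cases hpos : 0 ≤ u + β
  · refine ⟨(u + β).toNat * α + v * β, tg_mem _ _, ?_⟩
    have h1 : ((u + β).toNat : ℤ) = u + β := Int.toNat_of_nonneg hpos
    have : ((x:ℤ)) + α * β = (y:ℤ) + (((u + β).toNat * α + v * β : ℕ) : ℤ) := by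
      push_cast; rw [h1]; linarith
    exact_mod_cast this
  · push_neg at hpos
    exfalso; apply h2
    rcases Nat.eq_zero_or_pos v with rfl | hv
    · refine ⟨(-u).toNat * α, ⟨(-u).toNat, 0, by ring⟩, ?_⟩
      have h1 : ((-u).toNat : ℤ) = -u := Int.toNat_of_nonneg (by
        have : (0:ℤ) ≤ (β:ℤ) := by positivity
        linarith)
      have : (y:ℤ) = (x:ℤ) + (((-u).toNat * α : ℕ) : ℤ) := by
        push_cast; rw [h1]; simp at hu; linarith
      exact_mod_cast this
    · refine ⟨(-u - β).toNat * α + (α - v) * β, tg_mem _ _, ?_⟩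
      have h1 : ((-u - β).toNat : ℤ) = -u - β := Int.toNat_of_nonneg (by linarith)
      have h2' : ((α - v : ℕ) : ℤ) = (α:ℤ) - (v:ℤ) := by
        rw [Int.natCast_sub (le_of_lt hvα)]
      have : (y:ℤ) = (x:ℤ) + (((-u - β).toNat * α + (α - v) * β : ℕ) : ℤ) := by
        push_cast [Int.natCast_sub (le_of_lt hvα)]; rw [h1]; ring_nf; linarith
      exact_mod_cast this

end MaxSyzAux
set_option maxHeartbeats 1600000 in
theorem max_syzygy_eq_max_apery (α β M : ℕ) (hα : 1 < α) (hαβ : α < β)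
    (hcop : Nat.Coprime α β) (Δ I J : Set ℕ)
    (hΔ : IsGammaSemimodule (twoGen α β) Δ)
    (hI : IsMinGen (twoGen α β) I Δ)
    (hJ : IsMinGen (twoGen α β) J (Syz (twoGen α β) I))
    (hM : IsGreatest J M) :
    IsGreatest (Apery Δ (α + β)) M := by
  have hα0 : 0 < α := by omega
  have hβ0 : 0 < β := by omega
  have hΔcl : ∀ x ∈ Δ, ∀ g ∈ twoGen α β, x + g ∈ Δ := hΔ.2
  have hIeq : I = MaxSyzAux.MinSet (twoGen α β) Δ := MaxSyzAux.minGen_eq hΔcl hI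
  have hJeq : J = MaxSyzAux.MinSet (twoGen α β) (Syz (twoGen α β) I) :=
    MaxSyzAux.minGen_eq MaxSyzAux.syz_closed hJ
  have hISubΔ : I ⊆ Δ := hI.1
  have hΔmem : ∀ h ∈ I, ∀ u v : ℕ, h + (u * α + v * β) ∈ Δ :=
    fun h hh u v => hΔcl h (hISubΔ hh) _ ⟨u, v, rfl⟩
  have hmemΔ : ∀ x ∈ Δ, ∃ h ∈ I, ∃ u v : ℕ, x = h + (u * α + v * β) := by
    intro x hx
    rw [hI.2.1] at hx
    simp only [Set.mem_iUnion, shift, Set.mem_setOf_eq] at hx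
    obtain ⟨h, hh, g, ⟨u, v, rfl⟩, hxg⟩ := hx
    exact ⟨h, hh, u, v, hxg⟩
  have hSyzΔ : Syz (twoGen α β) I ⊆ Δ := by
    intro x hx
    obtain ⟨a, ha, b, hb, hab, ⟨g, hg, rfl⟩, -⟩ := MaxSyzAux.mem_syz_iff.mp hx
    exact hΔcl a (hISubΔ ha) g hg
  have hMJ : M ∈ J := hM.1
  have hMSyz : M ∈ Syz (twoGen α β) I := by rw [hJeq] at hMJ; exact hMJ.1
  have hMmin : ∀ y ∈ Syz (twoGen α β) I, (∃ g ∈ twoGen α β, M = y + g) → y = M := by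
    rw [hJeq] at hMJ; exact hMJ.2
  obtain ⟨g1, hg1, g2, hg2, hg12, hMg1, hMg2⟩ := MaxSyzAux.mem_syz_iff.mp hMSyz
  have hImin : ∀ x ∈ I, ∀ y ∈ Δ, (∃ g ∈ twoGen α β, x = y + g) → y = x := by
    intro x hx
    rw [hIeq] at hx
    exact hx.2
  constructor
  · -- M ∈ Apery Δ (α+β)
    refine ⟨hSyzΔ hMSyz, ?_⟩
    rintro ⟨d, hdΔ, hMd⟩
    obtain ⟨h, hhI, a, b, hd⟩ := hmemΔ d hdΔ
    obtain ⟨g'', hg''I, hg''h, γ, hγ, hMγ⟩ :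
        ∃ g'', g'' ∈ I ∧ g'' ≠ h ∧ ∃ γ ∈ twoGen α β, M = g'' + γ := by
      by_cases h1 : g1 = h
      · exact ⟨g2, hg2, fun hc => hg12 (h1.trans hc.symm), hMg2⟩
      · exact ⟨g1, hg1, h1, hMg1⟩
    obtain ⟨u, v, rfl⟩ := hγ
    by_cases hu : 0 < u
    · -- N := d + β ∈ Syz, M = N + α
      obtain ⟨u', rfl⟩ : ∃ u', u = u' + 1 := ⟨u - 1, by omega⟩
      have hr : (u' + 1) * α = u' * α + α := by ring
      have hN1 : d + β = g'' + (u' * α + v * β) := by linarith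
      have hN2 : d + β = h + (a * α + (b + 1) * β) := by
        have : (b + 1) * β = b * β + β := by ring
        linarith
      have hNSyz : d + β ∈ Syz (twoGen α β) I :=
        MaxSyzAux.mem_syz_iff.mpr ⟨g'', hg''I, h, hhI, hg''h,
          ⟨u' * α + v * β, MaxSyzAux.tg_mem _ _, hN1⟩,
          ⟨a * α + (b + 1) * β, MaxSyzAux.tg_mem _ _, hN2⟩⟩
      have := hMmin _ hNSyz ⟨α, ⟨1, 0, by ring⟩, by omega⟩
      omega
    · by_cases hv : 0 < v
      · obtain ⟨v', rfl⟩ : ∃ v', v = v' + 1 := ⟨v - 1, by omega⟩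
        have hr : (v' + 1) * β = v' * β + β := by ring
        have hN1 : d + α = g'' + (u * α + v' * β) := by linarith
        have hN2 : d + α = h + ((a + 1) * α + b * β) := by
          have : (a + 1) * α = a * α + α := by ring
          linarith
        have hNSyz : d + α ∈ Syz (twoGen α β) I :=
          MaxSyzAux.mem_syz_iff.mpr ⟨g'', hg''I, h, hhI, hg''h,
            ⟨u * α + v' * β, MaxSyzAux.tg_mem _ _, hN1⟩,
            ⟨(a + 1) * α + b * β, MaxSyzAux.tg_mem _ _, hN2⟩⟩
        have := hMmin _ hNSyz ⟨β, ⟨0, 1, by ring⟩, by omega⟩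
        omega
      · -- γ = 0 : M = g'' ∈ I, contradiction with minimality
        have hu0 : u = 0 := by omega
        have hv0 : v = 0 := by omega
        subst hu0; subst hv0
        simp only [Nat.zero_mul, Nat.add_zero] at hMγ
        have := hImin g'' hg''I d hdΔ ⟨α + β, ⟨1, 1, by ring⟩, by omega⟩
        omega
  · -- upper bound part
    intro y hy
    obtain ⟨hyΔ, hyAp⟩ := hy
    have hup : ∀ p ∈ Δ, ∀ k : ℕ, p + k * α ∈ Δ := fun p hp k => hΔcl p hp _ ⟨k, 0, by ring⟩
    -- Step A : the minimal element z of Δ in the class of (y - β) mod α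
    have hDne : {x | x ∈ Δ ∧ x % α = (y - β) % α}.Nonempty := by
      obtain ⟨d₀, hd₀⟩ := hΔ.1
      have e0 : d₀ + d₀ * (α - 1) = d₀ * α := by
        cases α with
        | zero => omega
        | succ n => simp only [Nat.succ_sub_one]; ring
      have e2 : (d₀ + α * β) * α = d₀ * α + α * (α * β) := by ring
      have hbig : α * β ≤ (y - β) + d₀ * (α - 1) + α * (α * β) := by
        have h3 : α * β ≤ α * (α * β) := Nat.le_mul_of_pos_left (α * β) hα0
        linarith [Nat.zero_le (y - β), Nat.zero_le (d₀ * (α - 1))]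
      refine ⟨d₀ + ((y - β) + d₀ * (α - 1) + α * (α * β)),
        hΔcl d₀ hd₀ _ (MaxSyzAux.tg_large hα0 hβ0 hcop hbig), ?_⟩
      have e3 : d₀ + ((y - β) + d₀ * (α - 1) + α * (α * β)) = (y - β) + (d₀ + α * β) * α := by
        linarith
      rw [e3, Nat.add_mul_mod_self_right]
    obtain ⟨z, hzΔ, hzmod, hzle⟩ : ∃ z, z ∈ Δ ∧ z % α = (y - β) % α ∧
        ∀ p, p ∈ Δ → p % α = (y - β) % α → z ≤ p := by
      refine ⟨sInf {x | x ∈ Δ ∧ x % α = (y - β) % α}, (Nat.sInf_mem hDne).1,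
        (Nat.sInf_mem hDne).2, fun p h1 h2 => Nat.sInf_le ⟨h1, h2⟩⟩
    have hPz : ∀ p ∈ Δ, z ≠ p + α := by
      intro p hp heq
      have h1 : p % α = z % α := by rw [heq, Nat.add_mod_right]
      have := hzle p hp (h1.trans hzmod)
      omega
    have hyzb : y ≤ z + β := by
      by_contra hcon
      push_neg at hcon
      have h2 : z < y - β := by omega
      have h3 : α ∣ (y - β - z) := by
        exact Nat.dvd_of_mod_eq_zero (Nat.sub_mod_eq_zero_of_mod_eq (hzmod.symm.trans rfl))
      obtain ⟨k, hk⟩ := h3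
      obtain ⟨m, hmk⟩ : ∃ m, m = α * k := ⟨_, rfl⟩
      have hk' : y - β - z = m := by rw [hk, hmk]
      have hm0 : 0 < m := by omega
      have hk1 : 1 ≤ k := by
        rcases Nat.eq_zero_or_pos k with rfl | h
        · simp at hmk; omega
        · exact h
      obtain ⟨k', rfl⟩ : ∃ k', k = k' + 1 := ⟨k - 1, by omega⟩
      have hbr : m = k' * α + α := by rw [hmk]; ring
      apply hyAp
      refine ⟨z + k' * α, hup z hzΔ k', ?_⟩
      have hy2 : y = z + β + m := by omega
      linarith
    -- Step B : z = g₀ + c * β with c < α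
    obtain ⟨g₀, hg₀I, c, hcα, hzc⟩ : ∃ g₀ ∈ I, ∃ c, c < α ∧ z = g₀ + c * β := by
      obtain ⟨h, hhI, u, v, hz'⟩ := hmemΔ z hzΔ
      have hu0 : u = 0 := by
        by_contra hu
        obtain ⟨u', rfl⟩ : ∃ u', u = u' + 1 := ⟨u - 1, by omega⟩
        refine hPz (h + (u' * α + v * β)) (hΔmem h hhI u' v) ?_
        have : (u' + 1) * α = u' * α + α := by ring
        linarith
      subst hu0
      simp only [Nat.zero_mul, Nat.zero_add] at hz'
      by_cases hvα : v < α
      · exact ⟨h, hhI, v, hvα, hz'⟩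
      · exfalso
        refine hPz (h + ((β - 1) * α + (v - α) * β)) (hΔmem h hhI (β - 1) (v - α)) ?_
        have e1 : (β - 1) * α + α = β * α := by
          cases β with
          | zero => omega
          | succ b => simp only [Nat.succ_sub_one]; ring
        have e2 : (v - α) * β + α * β = v * β := by
          rw [← Nat.add_mul, Nat.sub_add_cancel (by omega)]
        have e3 : β * α = α * β := by ring
        linarith
    -- Step C : minimal t ≥ 1 with z + t * β ∈ Syz
    have hTne : ∃ t₀, 1 ≤ t₀ ∧ z + t₀ * β ∈ Syz (twoGen α β) I := by
      refine ⟨g1 + g2 + α * β + 1, by omega,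
        MaxSyzAux.mem_syz_iff.mpr ⟨g1, hg1, g2, hg2, hg12, ?_, ?_⟩⟩
      · refine ⟨g1 * (β - 1) + (g2 + α * β + 1) * β + z, ?_, ?_⟩
        · apply MaxSyzAux.tg_large hα0 hβ0 hcop
          have h1 : g2 + α * β + 1 ≤ (g2 + α * β + 1) * β :=
            Nat.le_mul_of_pos_right _ hβ0
          linarith [Nat.zero_le (g1 * (β - 1)), Nat.zero_le z]
        · cases β with
          | zero => omega
          | succ b => simp only [Nat.succ_sub_one]; ring
      · refine ⟨g2 * (β - 1) + (g1 + α * β + 1) * β + z, ?_, ?_⟩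
        · apply MaxSyzAux.tg_large hα0 hβ0 hcop
          have h1 : g1 + α * β + 1 ≤ (g1 + α * β + 1) * β :=
            Nat.le_mul_of_pos_right _ hβ0
          linarith [Nat.zero_le (g2 * (β - 1)), Nat.zero_le z]
        · cases β with
          | zero => omega
          | succ b => simp only [Nat.succ_sub_one]; ring
    obtain ⟨t, ht1, htSyz, htle⟩ : ∃ t, 1 ≤ t ∧ z + t * β ∈ Syz (twoGen α β) I ∧
        ∀ s, 1 ≤ s → z + s * β ∈ Syz (twoGen α β) I → t ≤ s := by
      refine ⟨sInf {s | 1 ≤ s ∧ z + s * β ∈ Syz (twoGen α β) I}, (Nat.sInf_mem hTne).1,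
        (Nat.sInf_mem hTne).2, fun s h1 h2 => Nat.sInf_le ⟨h1, h2⟩⟩
    -- no smaller syzygy on the ray z + s*β
    have hnotSyz : ∀ s, s < t → z + s * β ∉ Syz (twoGen α β) I := by
      intro s hst hmem
      rcases Nat.eq_zero_or_pos s with rfl | hs1
      · simp only [Nat.zero_mul, Nat.add_zero] at hmem
        obtain ⟨a', haI, b', hbI, hab, ⟨ga, hgaΓ, hza⟩, ⟨gb, hgbΓ, hzb⟩⟩ :=
          MaxSyzAux.mem_syz_iff.mp hmem
        obtain ⟨ua, va, rfl⟩ := hgaΓ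
        obtain ⟨ub, vb, rfl⟩ := hgbΓ
        have hua : ua = 0 := by
          by_contra hc
          obtain ⟨u', rfl⟩ : ∃ u', ua = u' + 1 := ⟨ua - 1, by omega⟩
          refine hPz (a' + (u' * α + va * β)) (hΔmem a' haI u' va) ?_
          have : (u' + 1) * α = u' * α + α := by ring
          linarith
        have hub : ub = 0 := by
          by_contra hc
          obtain ⟨u', rfl⟩ : ∃ u', ub = u' + 1 := ⟨ub - 1, by omega⟩
          refine hPz (b' + (u' * α + vb * β)) (hΔmem b' hbI u' vb) ?_
          have : (u' + 1) * α = u' * α + α := by ring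
          linarith
        subst hua; subst hub
        simp only [Nat.zero_mul, Nat.zero_add] at hza hzb
        rcases lt_trichotomy va vb with hlt | heqv | hgt
        · have ebr : (vb - va) * β + va * β = vb * β := by
            rw [← Nat.add_mul, Nat.sub_add_cancel (le_of_lt hlt)]
          have : b' = a' := hImin a' haI b' (hISubΔ hbI)
            ⟨(vb - va) * β, ⟨0, vb - va, by ring⟩, by linarith⟩
          exact hab this.symm
        · subst heqv
          exact hab (by omega)
        · have ebr : (va - vb) * β + vb * β = va * β := by
            rw [← Nat.add_mul, Nat.sub_add_cancel (le_of_lt hgt)]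
          have : a' = b' := hImin b' hbI a' (hISubΔ haI)
            ⟨(va - vb) * β, ⟨0, va - vb, by ring⟩, by linarith⟩
          exact hab this
      · exact absurd (htle s hs1 hmem) (by omega)
    -- Step E : t ≤ α - c
    obtain ⟨gg, hggI, hggne⟩ : ∃ gg, gg ∈ I ∧ gg ≠ g₀ := by
      by_cases hg1g₀ : g1 = g₀
      · exact ⟨g2, hg2, by rw [← hg1g₀]; exact hg12.symm⟩
      · exact ⟨g1, hg1, hg1g₀⟩
    have hEmem : z + (α - c) * β ∈ Syz (twoGen α β) I := by
      have hkey : ∃ g ∈ twoGen α β, g₀ + α * β = gg + g := by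
        apply MaxSyzAux.key_spread hα0 hβ0 hcop
        rintro ⟨g, hgΓ, hgg⟩
        exact hggne (hImin gg hggI g₀ (hISubΔ hg₀I) ⟨g, hgΓ, hgg⟩).symm
      obtain ⟨g, hgΓ, hkeyeq⟩ := hkey
      have ecb : c * β + (α - c) * β = α * β := by
        rw [← Nat.add_mul, Nat.add_sub_cancel' (le_of_lt hcα)]
      have hzeq : z + (α - c) * β = g₀ + α * β := by linarith
      exact MaxSyzAux.mem_syz_iff.mpr ⟨g₀, hg₀I, gg, hggI, fun hc => hggne hc.symm,
        ⟨α * β, ⟨0, α, by ring⟩, hzeq⟩, ⟨g, hgΓ, by omega⟩⟩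
    have htαc : t ≤ α - c := htle (α - c) (by omega) hEmem
    -- key step lemma
    have hstep : ∀ h ∈ I, ∀ u' v' : ℕ, z + t * β = h + (u' * α + v' * β) + α → v' = 0 := by
      intro h hhI u' v' heq
      by_contra hv'
      have hv1 : 1 ≤ v' := by omega
      by_cases hvt : t ≤ v'
      · refine hPz (h + (u' * α + (v' - t) * β)) (hΔmem h hhI u' (v' - t)) ?_
        have e : (v' - t) * β + t * β = v' * β := by
          rw [← Nat.add_mul, Nat.sub_add_cancel hvt]
        linarith
      · push_neg at hvt
        have e : (t - v') * β + v' * β = t * β := by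
          rw [← Nat.add_mul, Nat.sub_add_cancel (le_of_lt hvt)]
        have e2 : (u' + 1) * α = u' * α + α := by ring
        have heq2 : z + (t - v') * β = h + (u' + 1) * α := by linarith
        by_cases hhg : h = g₀
        · subst hhg
          have e4 : c * β + (t - v') * β = (c + (t - v')) * β := (Nat.add_mul _ _ _).symm
          have e3 : (c + (t - v')) * β = (u' + 1) * α := by linarith
          have hdvd : α ∣ (c + (t - v')) := by
            refine Nat.Coprime.dvd_of_dvd_mul_right hcop ⟨u' + 1, by linarith⟩
          have hlow : 0 < c + (t - v') := by omega
          have hhigh : c + (t - v') < α := by omega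
          exact absurd (Nat.le_of_dvd hlow hdvd) (by omega)
        · have e5 : c * β + (t - v') * β = (c + (t - v')) * β := (Nat.add_mul _ _ _).symm
          have hm : z + (t - v') * β ∈ Syz (twoGen α β) I :=
            MaxSyzAux.mem_syz_iff.mpr ⟨h, hhI, g₀, hg₀I, hhg,
              ⟨(u' + 1) * α, ⟨u' + 1, 0, by ring⟩, by linarith⟩,
              ⟨(c + (t - v')) * β, ⟨0, c + (t - v'), by ring⟩, by linarith⟩⟩
          exact hnotSyz (t - v') (by omega) hm
    -- Step F : z + t*β ∈ J
    have hwJ : z + t * β ∈ J := by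
      rw [hJeq]
      refine ⟨htSyz, ?_⟩
      rintro x hxSyz ⟨γ, hγΓ, hwx⟩
      by_contra hxw
      obtain ⟨u, v, rfl⟩ := hγΓ
      by_cases hv : 0 < v
      · obtain ⟨v', rfl⟩ : ∃ v', v = v' + 1 := ⟨v - 1, by omega⟩
        obtain ⟨t', htt'⟩ : ∃ t', t = t' + 1 := ⟨t - 1, by omega⟩
        have hmem' : x + (u * α + v' * β) ∈ Syz (twoGen α β) I :=
          MaxSyzAux.syz_closed x hxSyz _ (MaxSyzAux.tg_mem _ _)
        have hconv : x + (u * α + v' * β) = z + t' * β := by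
          have e1 : (v' + 1) * β = v' * β + β := by ring
          have e2 : (t' + 1) * β = t' * β + β := by ring
          rw [htt'] at hwx
          linarith
        rw [hconv] at hmem'
        exact hnotSyz t' (by omega) hmem'
      · have hv0 : v = 0 := by omega
        subst hv0
        have hu : 0 < u := by
          by_contra h0
          have hu0 : u = 0 := by omega
          subst hu0
          simp only [Nat.zero_mul, Nat.add_zero] at hwx
          exact hxw (by omega)
        obtain ⟨u', rfl⟩ : ∃ u', u = u' + 1 := ⟨u - 1, by omega⟩
        have hq : x + u' * α ∈ Syz (twoGen α β) I :=
          MaxSyzAux.syz_closed x hxSyz (u' * α) ⟨u', 0, by ring⟩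
        have e2 : (u' + 1) * α = u' * α + α := by ring
        have hqeq : z + t * β = (x + u' * α) + α := by linarith
        obtain ⟨a', haI, b', hbI, hab, ⟨ga, hgaΓ, hqa⟩, ⟨gb, hgbΓ, hqb⟩⟩ :=
          MaxSyzAux.mem_syz_iff.mp hq
        obtain ⟨ua, va, rfl⟩ := hgaΓ
        obtain ⟨ub, vb, rfl⟩ := hgbΓ
        have hva : va = 0 := hstep a' haI ua va (by linarith)
        have hvb : vb = 0 := hstep b' hbI ub vb (by linarith)
        subst hva; subst hvb
        simp only [Nat.zero_mul, Nat.add_zero] at hqa hqb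
        have ha2 : z + t * β = a' + (ua + 1) * α := by
          have : (ua + 1) * α = ua * α + α := by ring
          linarith
        have hb2 : z + t * β = b' + (ub + 1) * α := by
          have : (ub + 1) * α = ub * α + α := by ring
          linarith
        rcases lt_trichotomy ua ub with hlt | heqv | hgt
        · have ebr : (ub - ua) * α + (ua + 1) * α = (ub + 1) * α := by
            rw [← Nat.add_mul]
            congr 1
            omega
          have : b' = a' := hImin a' haI b' (hISubΔ hbI)
            ⟨(ub - ua) * α, ⟨ub - ua, 0, by ring⟩, by linarith⟩
          exact hab this.symm
        · subst heqv
          exact hab (by omega)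
        · have ebr : (ua - ub) * α + (ub + 1) * α = (ua + 1) * α := by
            rw [← Nat.add_mul]
            congr 1
            omega
          have : a' = b' := hImin b' hbI a' (hISubΔ haI)
            ⟨(ua - ub) * α, ⟨ua - ub, 0, by ring⟩, by linarith⟩
          exact hab this
    have hβt : β ≤ t * β := Nat.le_mul_of_pos_left β ht1
    have hMb := hM.2 hwJ
    linarith
end

section
/- Let Γ = ⟨α,β⟩ with gcd(α,β)=1, 1<α<β, and Δ a normalized Γ-semimodule with dual Δ* minimally generated by x₀,…,x_n. Then c(Δ) = αβ − min_{ℕ}{x₀,…,x_n} − α − β + 1. -/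
open Set

/-- Integer version of twoGen. -/
def SZ (α β : ℕ) : Set ℤ := {n | ∃ u v : ℕ, n = u * α + v * β}

lemma SZ_nonneg {α β : ℕ} {n : ℤ} (h : n ∈ SZ α β) : 0 ≤ n := by
  obtain ⟨u, v, rfl⟩ := h; positivity

lemma cast_mem_SZ {α β g : ℕ} (hg : g ∈ twoGen α β) : (g : ℤ) ∈ SZ α β := by
  obtain ⟨u, v, rfl⟩ := hg
  exact ⟨u, v, by push_cast; ring⟩

lemma SZ_to_twoGen {α β : ℕ} {z : ℤ} (hz : z ∈ SZ α β) :
    ∃ g ∈ twoGen α β, z = (g : ℤ) := by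
  obtain ⟨u, v, rfl⟩ := hz
  exact ⟨u * α + v * β, ⟨u, v, rfl⟩, by push_cast; ring⟩

lemma F_notMem {α β : ℕ} (hα : 1 < α) (hαβ : α < β) (hcop : Nat.Coprime α β) :
    ((α : ℤ) * β - α - β) ∉ SZ α β := by
  rintro ⟨u, v, h⟩
  have hβ : (0 : ℤ) < β := by exact_mod_cast (by omega : 0 < β)
  have hdvd : (β : ℤ) ∣ ((u : ℤ) + 1) * α := ⟨(α : ℤ) - v - 1, by linarith [h]⟩
  have hco : IsCoprime (β : ℤ) (α : ℤ) := Nat.isCoprime_iff_coprime.mpr hcop.symm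
  have hdu : (β : ℤ) ∣ (u : ℤ) + 1 := hco.dvd_of_dvd_mul_right hdvd
  have hle : (β : ℤ) ≤ (u : ℤ) + 1 := Int.le_of_dvd (by positivity) hdu
  have hαpos : (0 : ℤ) ≤ α := by positivity
  have hv0 : (0 : ℤ) ≤ v := by positivity
  nlinarith [mul_le_mul_of_nonneg_right hle hαpos, mul_nonneg hv0 hβ.le]

lemma mem_or_F_sub_mem {α β : ℕ} (hα : 0 < α) (hcop : Nat.Coprime α β) (n : ℤ) :
    n ∈ SZ α β ∨ ((α : ℤ) * β - α - β - n) ∈ SZ α β := by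
  obtain ⟨x, y, hxy⟩ := Nat.isCoprime_iff_coprime.mpr hcop
  have hαZ : (0 : ℤ) < α := by exact_mod_cast hα
  set v : ℤ := (n * y) % α with hv
  have hv0 : 0 ≤ v := Int.emod_nonneg _ (by omega)
  have hvα : v < α := Int.emod_lt_of_pos _ hαZ
  have e1 : (n * y) % (α : ℤ) + α * (n * y / α) = n * y := Int.emod_add_mul_ediv _ _
  have hdvd : (α : ℤ) ∣ n - v * β :=
    ⟨n * x + (n * y / α) * β, by rw [hv]; linear_combination (-n) * hxy - (β : ℤ) * e1⟩
  obtain ⟨u, hu⟩ := hdvd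
  rcases le_or_gt 0 u with h0u | h0u
  · left
    refine ⟨u.toNat, v.toNat, ?_⟩
    rw [Int.toNat_of_nonneg h0u, Int.toNat_of_nonneg hv0]
    linarith
  · right
    refine ⟨(-u - 1).toNat, ((α : ℤ) - 1 - v).toNat, ?_⟩
    rw [Int.toNat_of_nonneg (by omega), Int.toNat_of_nonneg (by omega)]
    linarith

theorem conductor_via_dual (α β : ℕ) (hα : 1 < α) (hαβ : α < β)
    (hcop : Nat.Coprime α β) (Δ : Set ℕ) (X : Set ℤ) (m : ℤ)
    (hΔ : IsGammaSemimodule (twoGen α β) Δ) (h0 : 0 ∈ Δ)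
    (hX : IsMinGenZ (twoGen α β) X (DualZ (twoGen α β) Δ))
    (hm : IsLeast X m) :
    (conductorOf Δ : ℤ) = (α : ℤ) * β - m - α - β + 1 := by
  set F : ℤ := (α : ℤ) * β - α - β with hF
  have hαpos : 0 < α := by omega
  have hcomp := fun n => mem_or_F_sub_mem (α := α) (β := β) hαpos hcop n
  have hFnot := F_notMem hα hαβ hcop
  -- m is in the dual
  have hmD : m ∈ DualZ (twoGen α β) Δ := hX.1 hm.1
  -- m is a lower bound of the dual
  have hle : ∀ z ∈ DualZ (twoGen α β) Δ, m ≤ z := by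
    intro z hz
    rw [hX.2.1] at hz
    simp only [mem_iUnion, shiftZ, mem_setOf_eq] at hz
    obtain ⟨x, hxX, g, hg, rfl⟩ := hz
    have h1 := hm.2 hxX
    have h2 : (0 : ℤ) ≤ g := by positivity
    linarith
  -- m ≤ F + 1
  have hmF : m ≤ F + 1 := by
    refine hle _ ?_
    intro d hd
    rcases hcomp (F + 1 + d) with h | h
    · exact SZ_to_twoGen h
    · exfalso
      have h1 := SZ_nonneg h
      have h2 : (0 : ℤ) ≤ d := by positivity
      rw [hF] at h1
      linarith
  -- if n ∉ Δ then n ≤ F - m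
  have hub : ∀ n : ℕ, n ∉ Δ → (n : ℤ) ≤ F - m := by
    intro n hn
    have hFn : F - n ∈ DualZ (twoGen α β) Δ := by
      intro d hd
      rcases hcomp (F - n + d) with h | h
      · exact SZ_to_twoGen h
      · exfalso
        have h' : ((n : ℤ) - d) ∈ SZ α β := by
          convert h using 1; rw [hF]; ring
        obtain ⟨u, v, huv⟩ := h'
        have hnd : n = d + (u * α + v * β) := by
          have : (n : ℤ) = (d : ℤ) + ((u * α + v * β : ℕ) : ℤ) := by push_cast; linarith
          exact_mod_cast this
        exact hn (hnd ▸ hΔ.2 d hd (u * α + v * β) ⟨u, v, rfl⟩)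
    have := hle _ hFn
    linarith
  -- F - m is not in Δ
  have hFm_not : ∀ n : ℕ, (n : ℤ) = F - m → n ∉ Δ := by
    intro n hn hnΔ
    obtain ⟨g, hg, hgeq⟩ := hmD n hnΔ
    have hgS : (g : ℤ) ∈ SZ α β := cast_mem_SZ hg
    apply hFnot
    rw [hF] at hn
    have : ((α : ℤ) * β - α - β) = (g : ℤ) := by linarith
    rw [this]
    exact hgS
  -- the conductor
  set t : ℕ := (F + 1 - m).toNat with htd
  have ht : (t : ℤ) = F + 1 - m := Int.toNat_of_nonneg (by linarith)
  have htmem : t ∈ {c | ∀ n, c ≤ n → n ∈ Δ} := by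
    intro n hn
    by_contra hnot
    have h1 := hub n hnot
    have h2 : (t : ℤ) ≤ n := by exact_mod_cast hn
    linarith
  have h1 : conductorOf Δ ≤ t := Nat.sInf_le htmem
  have h2 : t ≤ conductorOf Δ := by
    by_contra hcon
    push_neg at hcon
    have hc : ∀ n, conductorOf Δ ≤ n → n ∈ Δ := Nat.sInf_mem ⟨t, htmem⟩
    have ht1 : ((t - 1 : ℕ) : ℤ) = F - m := by
      have h1t : 1 ≤ t := by omega
      have : ((t - 1 : ℕ) : ℤ) = (t : ℤ) - 1 := by omega
      rw [this, ht]; ring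
    exact hFm_not (t - 1) ht1 (hc (t - 1) (by omega))
  have hct : conductorOf Δ = t := le_antisymm h1 h2
  rw [hct, ht, hF]
  ring
end
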